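/- arXiv:1711.09935 — 12 statements merged into one kernel-verified Lean document; each statement's English description precedes it below -/
import Mathlib

section
/- If A is an n×n matrix with all entries in {0,1} that contains at most 2n nonzero entries, then |det(A)| ≤ 2^(n/6) · 3^(n/6) (that is, |det(A)| ≤ 6^(n/6)). -/
/-!
Let `w = 6^(1/6)`. By induction on `n`, every 0/1 matrix of size `n` with `N` ones satisfies
`|det A| ≤ w^(N - n)`; the argument only uses `w + 1 ≤ w³` and `k ≤ w^(k+1)` for `k ≥ 3`.
Laplace expansion along a row with `k` ones whose columns all have at least `g` ones gives
`|det A| ≤ k · w^(N - n + 1 - k - g)`, since each minor loses the `k + g - 1` ones of a row and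
a column. A zero row kills the determinant and a row with a single one costs nothing. For a row
with two ones, the two minors lose at least 3 and 4 ones, paid for by `w⁻² + w⁻³ ≤ 1`; when both
of its columns have exactly two ones, these columns are either equal, or the second minor has a
column with a single one lying in a row with two ones, and expanding there recovers the missing
one. If every row and column has at least three ones, expansion along any row costs
`k · w^-(k+1) ≤ 1`. Columns are handled by transposition, and `N ≤ 2n` gives
`|det A| ≤ w^n = 6^(n/6)`.
-/

open Finset

lemma Nat.pow_six_le_six_pow_succ {k : ℕ} (hk : 3 ≤ k) : k ^ 6 ≤ 6 ^ (k + 1) := by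
  induction k, hk using Nat.le_induction with
  | base => norm_num
  | succ k hk ih =>
    have h := Nat.pow_le_pow_left (show 3 * (k + 1) ≤ 4 * k by omega) 6
    rw [mul_pow, mul_pow] at h
    rw [pow_succ 6]
    omega

section

variable {w : ℝ}

lemma add_one_le_pow_three_of_pow_six_eq_six (hw : 0 ≤ w) (h6 : w ^ 6 = 6) : w + 1 ≤ w ^ 3 := by
  have hupper : w ≤ 1.35 := (pow_le_pow_iff_left₀ hw (by norm_num) (by norm_num : 6 ≠ 0)).1
    (by rw [h6]; norm_num)
  have hlower : 2.44 ≤ w ^ 3 := (pow_le_pow_iff_left₀ (by norm_num) (by positivity)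
    (by norm_num : 2 ≠ 0)).1 (by rw [← pow_mul, h6]; norm_num)
  linarith

lemma natCast_le_pow_succ_of_pow_six_eq_six (hw : 0 ≤ w) (h6 : w ^ 6 = 6) {k : ℕ}
    (hk : 3 ≤ k) : (k : ℝ) ≤ w ^ (k + 1) := by
  refine (pow_le_pow_iff_left₀ (by positivity) (by positivity) (by norm_num : 6 ≠ 0)).1 ?_
  rw [← pow_mul, mul_comm, pow_mul, h6]
  exact_mod_cast Nat.pow_six_le_six_pow_succ hk

lemma zpow_sub_two_add_zpow_sub_three_le (hw : 1 ≤ w) (hw3 : w + 1 ≤ w ^ 3) (e : ℤ) :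
    w ^ (e - 2) + w ^ (e - 3) ≤ w ^ e := by
  have hw0 : w ≠ 0 := by positivity
  calc w ^ (e - 2) + w ^ (e - 3) = w ^ (e - 3) * (w + 1) := by
        rw [show e - 2 = e - 3 + 1 by ring, zpow_add_one₀ hw0]; ring
    _ ≤ w ^ (e - 3) * w ^ 3 := by gcongr
    _ = w ^ e := by rw [← zpow_natCast, ← zpow_add₀ hw0]; norm_num

end

lemma Fin.card_filter_eq_ite_add {β : Type*} {n : ℕ} (p : β → Prop) [DecidablePred p]
    (v : Fin (n + 1) → β) (c : Fin (n + 1)) :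
    #{j | p (v j)} = (if p (v c) then 1 else 0) + #{j | p (v (c.succAbove j))} := by
  simp only [card_filter, Fin.sum_univ_succAbove _ c]

lemma eq_of_card_filter_eq_two {ι α : Type*} [Fintype ι] [DecidableEq ι] [Zero α] [One α]
    [DecidableEq α] {u v : ι → α} (hu : ∀ x, u x = 0 ∨ u x = 1)
    (hv : ∀ x, v x = 0 ∨ v x = 1)
    (hu2 : #{x | u x = 1} = 2) (hv2 : #{x | v x = 1} = 2) {a b : ι} (hab : a ≠ b)
    (hua : u a = 1) (hub : u b = 1) (hva : v a = 1) (hvb : v b = 1) : u = v := by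
  have support_eq {f : ι → α} (h2 : #{x | f x = 1} = 2) (ha : f a = 1) (hb : f b = 1) :
      ({x | f x = 1} : Finset ι) = {a, b} :=
    (eq_of_subset_of_card_le (by simp [insert_subset_iff, ha, hb])
      (by simp [h2, card_pair hab])).symm
  have hsupp := (support_eq hu2 hua hub).trans (support_eq hv2 hva hvb).symm
  funext x
  have hx : u x = 1 ↔ v x = 1 := by simpa using congrArg (x ∈ ·) hsupp
  rcases hu x with h | h <;> rcases hv x with h' | h' <;> simp_all

namespace Matrix

section

variable {m n α : Type*} [Fintype m] [Fintype n] [One α] [DecidableEq α]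

def numOnes (A : Matrix m n α) : ℕ := #{p : m × n | A p.1 p.2 = 1}

def rowNumOnes (A : Matrix m n α) (i : m) : ℕ := #{j | A i j = 1}

def colNumOnes (A : Matrix m n α) (j : n) : ℕ := #{i | A i j = 1}

lemma numOnes_transpose (A : Matrix m n α) : numOnes Aᵀ = numOnes A := by
  rw [numOnes, numOnes, card_filter, card_filter, Fintype.sum_prod_type, Fintype.sum_prod_type,
    Finset.sum_comm]
  rfl

lemma numOnes_eq_sum_rowNumOnes (A : Matrix m n α) : numOnes A = ∑ i, rowNumOnes A i := by
  simp only [numOnes, rowNumOnes, card_filter, Fintype.sum_prod_type]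

end

variable {α : Type*} [One α] [DecidableEq α] {n : ℕ}

lemma colNumOnes_pos {A : Matrix (Fin n) (Fin n) α} {i j : Fin n} (h : A i j = 1) :
    0 < colNumOnes A j :=
  card_pos.2 ⟨i, by simp [h]⟩

lemma rowNumOnes_succAbove (A : Matrix (Fin (n + 1)) (Fin (n + 1)) α) (r c : Fin (n + 1))
    (i : Fin n) :
    rowNumOnes A (r.succAbove i) = (if A (r.succAbove i) c = 1 then 1 else 0) +
      rowNumOnes (A.submatrix r.succAbove c.succAbove) i :=
  Fin.card_filter_eq_ite_add (· = 1) (A (r.succAbove i)) c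

lemma colNumOnes_succAbove (A : Matrix (Fin (n + 1)) (Fin (n + 1)) α) (r c : Fin (n + 1))
    (j : Fin n) :
    colNumOnes A (c.succAbove j) = (if A r (c.succAbove j) = 1 then 1 else 0) +
      colNumOnes (A.submatrix r.succAbove c.succAbove) j :=
  Fin.card_filter_eq_ite_add (· = 1) (fun i => A i (c.succAbove j)) r

lemma numOnes_submatrix_succAbove (A : Matrix (Fin (n + 1)) (Fin (n + 1)) α) {r c : Fin (n + 1)}
    (h : A r c = 1) :
    numOnes (A.submatrix r.succAbove c.succAbove) + rowNumOnes A r + colNumOnes A c =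
      numOnes A + 1 := by
  have hcol : colNumOnes A c = 1 + ∑ i, if A (r.succAbove i) c = 1 then 1 else 0 := by
    rw [colNumOnes, Fin.card_filter_eq_ite_add (· = 1) (fun i => A i c) r, if_pos h, card_filter]
  simp only [numOnes_eq_sum_rowNumOnes, Fin.sum_univ_succAbove _ r, rowNumOnes_succAbove A r c,
    sum_add_distrib, hcol]
  ring

lemma abs_det_le_sum_abs_det_submatrix (A : Matrix (Fin (n + 1)) (Fin (n + 1)) ℝ)
    (r : Fin (n + 1)) (h01 : ∀ j, A r j = 0 ∨ A r j = 1) :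
    |A.det| ≤ ∑ j with A r j = 1, |(A.submatrix r.succAbove j.succAbove).det| := by
  rw [det_succ_row A r, sum_filter]
  refine (abs_sum_le_sum_abs _ _).trans (sum_le_sum fun j _ => ?_)
  rcases h01 j with h | h <;> simp [h, abs_mul]

def DetBound (w : ℝ) (n : ℕ) : Prop :=
  ∀ A : Matrix (Fin n) (Fin n) ℝ, (∀ i j, A i j = 0 ∨ A i j = 1) →
    |A.det| ≤ w ^ ((numOnes A : ℤ) - n)

variable {w : ℝ}

lemma abs_det_submatrix_le_zpow (ih : DetBound w n) (A : Matrix (Fin (n + 1)) (Fin (n + 1)) ℝ)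
    (h01 : ∀ i j, A i j = 0 ∨ A i j = 1) {r c : Fin (n + 1)} (h : A r c = 1) :
    |(A.submatrix r.succAbove c.succAbove).det| ≤
      w ^ ((numOnes A : ℤ) + 1 - rowNumOnes A r - colNumOnes A c - n) := by
  refine (ih (A.submatrix r.succAbove c.succAbove) fun _ _ => h01 _ _).trans_eq
    (congrArg (w ^ ·) ?_)
  have := numOnes_submatrix_succAbove A h
  omega

lemma abs_det_le_rowNumOnes_mul_zpow (hw : 1 ≤ w) (ih : DetBound w n)
    (A : Matrix (Fin (n + 1)) (Fin (n + 1)) ℝ) (h01 : ∀ i j, A i j = 0 ∨ A i j = 1)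
    (r : Fin (n + 1)) {g : ℕ} (hg : ∀ j, A r j = 1 → g ≤ colNumOnes A j) :
    |A.det| ≤ rowNumOnes A r * w ^ ((numOnes A : ℤ) + 1 - rowNumOnes A r - g - n) := by
  refine (abs_det_le_sum_abs_det_submatrix A r (h01 r)).trans ?_
  refine (sum_le_card_nsmul _ _ _ fun j hj => ?_).trans_eq (nsmul_eq_mul _ _)
  have hj : A r j = 1 := (mem_filter.1 hj).2
  refine (abs_det_submatrix_le_zpow ih A h01 hj).trans (zpow_le_zpow_right₀ hw ?_)
  have := hg j hj
  omega

lemma abs_det_le_colNumOnes_mul_zpow (hw : 1 ≤ w) (ih : DetBound w n)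
    (A : Matrix (Fin (n + 1)) (Fin (n + 1)) ℝ) (h01 : ∀ i j, A i j = 0 ∨ A i j = 1)
    (c : Fin (n + 1)) {g : ℕ} (hg : ∀ i, A i c = 1 → g ≤ rowNumOnes A i) :
    |A.det| ≤ colNumOnes A c * w ^ ((numOnes A : ℤ) + 1 - colNumOnes A c - g - n) := by
  have h := abs_det_le_rowNumOnes_mul_zpow hw ih Aᵀ (fun i j => h01 j i) c hg
  rwa [det_transpose, numOnes_transpose] at h

lemma det_eq_zero_of_colNumOnes_eq_two {m : ℕ} (A : Matrix (Fin m) (Fin m) ℝ)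
    (h01 : ∀ i j, A i j = 0 ∨ A i j = 1) {c₁ c₂ : Fin m} (hc : c₁ ≠ c₂)
    (h₁ : colNumOnes A c₁ = 2) (h₂ : colNumOnes A c₂ = 2) {r i : Fin m} (hri : r ≠ i)
    (hr₁ : A r c₁ = 1) (hr₂ : A r c₂ = 1) (hi₁ : A i c₁ = 1) (hi₂ : A i c₂ = 1) :
    A.det = 0 :=
  det_zero_of_column_eq hc fun x => congrFun (eq_of_card_filter_eq_two (fun x => h01 x c₁)
    (fun x => h01 x c₂) h₁ h₂ hri hr₁ hi₁ hr₂ hi₂) x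

lemma abs_det_submatrix_le_of_colNumOnes_eq_two (hw : 1 ≤ w) (ih : ∀ m ≤ n, DetBound w m)
    (A : Matrix (Fin (n + 1)) (Fin (n + 1)) ℝ) (h01 : ∀ i j, A i j = 0 ∨ A i j = 1)
    (hrows : ∀ i, 2 ≤ rowNumOnes A i) {r c₁ c₂ : Fin (n + 1)} (hc : c₁ ≠ c₂)
    (hr₁ : A r c₁ = 1) (hr₂ : A r c₂ = 1) (hrow : rowNumOnes A r = 2)
    (h₁ : colNumOnes A c₁ = 2) (h₂ : colNumOnes A c₂ = 2)
    (hdisj : ∀ i, i ≠ r → A i c₁ = 1 → A i c₂ = 0) :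
    |(A.submatrix r.succAbove c₂.succAbove).det| ≤
      w ^ ((numOnes A : ℤ) - (n + 1 : ℕ) - 3) := by
  cases n with
  | zero =>
    have : colNumOnes A c₁ ≤ 1 := card_le_univ _
    omega
  | succ n =>
  obtain ⟨c, rfl⟩ := Fin.exists_succAbove_eq hc
  have hrowM (i : Fin (n + 1)) (hi : A (r.succAbove i) (c₂.succAbove c) = 1) :
      2 ≤ rowNumOnes (A.submatrix r.succAbove c₂.succAbove) i := by
    have := rowNumOnes_succAbove A r c₂ i
    rw [hdisj _ (Fin.succAbove_ne r i) hi, if_neg zero_ne_one] at this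
    have := hrows (r.succAbove i)
    omega
  have hcol := colNumOnes_succAbove A r c₂ c
  have hnum := numOnes_submatrix_succAbove A hr₂
  rw [if_pos hr₁] at hcol
  refine (abs_det_le_colNumOnes_mul_zpow hw (ih n (by omega))
    (A.submatrix r.succAbove c₂.succAbove) (fun _ _ => h01 _ _) c hrowM).trans ?_
  generalize A.submatrix r.succAbove c₂.succAbove = M at hcol hnum ⊢
  rw [show colNumOnes M c = 1 by omega, Nat.cast_one, one_mul]
  exact zpow_le_zpow_right₀ hw (by omega)

lemma abs_det_le_of_rowNumOnes_eq_two (hw : 1 ≤ w) (hw3 : w + 1 ≤ w ^ 3)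
    (ih : ∀ m ≤ n, DetBound w m) (A : Matrix (Fin (n + 1)) (Fin (n + 1)) ℝ)
    (h01 : ∀ i j, A i j = 0 ∨ A i j = 1) (hrows : ∀ i, 2 ≤ rowNumOnes A i) {r : Fin (n + 1)}
    (hr : rowNumOnes A r = 2) :
    |A.det| ≤ w ^ ((numOnes A : ℤ) - (n + 1 : ℕ)) := by
  obtain ⟨c₁, c₂, hc, hrow⟩ := card_eq_two.1 hr
  wlog hle : colNumOnes A c₁ ≤ colNumOnes A c₂ generalizing c₁ c₂
  · exact this c₂ c₁ hc.symm (by rw [hrow, pair_comm]) (by omega)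
  have hmem (j : Fin (n + 1)) : A r j = 1 ↔ j = c₁ ∨ j = c₂ := by
    simpa using congrArg (j ∈ ·) hrow
  have hr₁ : A r c₁ = 1 := (hmem c₁).2 (Or.inl rfl)
  have hr₂ : A r c₂ = 1 := (hmem c₂).2 (Or.inr rfl)
  have hpos := colNumOnes_pos hr₁
  obtain h₁ | h₁ : colNumOnes A c₁ = 1 ∨ 2 ≤ colNumOnes A c₁ := by omega
  · refine (abs_det_le_colNumOnes_mul_zpow hw (ih n le_rfl) A h01 c₁ (g := 2)
      fun i _ => hrows i).trans ?_
    rw [h₁, Nat.cast_one, one_mul]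
    exact zpow_le_zpow_right₀ hw (by omega)
  have of_abs_det_submatrix_le
      (h : |(A.submatrix r.succAbove c₂.succAbove).det| ≤
        w ^ ((numOnes A : ℤ) - (n + 1 : ℕ) - 3)) :
      |A.det| ≤ w ^ ((numOnes A : ℤ) - (n + 1 : ℕ)) := by
    have hsplit := abs_det_le_sum_abs_det_submatrix A r (h01 r)
    rw [hrow, sum_pair hc] at hsplit
    have hM₁ := (abs_det_submatrix_le_zpow (ih n le_rfl) A h01 hr₁).trans
      (zpow_le_zpow_right₀ hw (show _ ≤ (numOnes A : ℤ) - (n + 1 : ℕ) - 2 by omega))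
    exact hsplit.trans ((add_le_add hM₁ h).trans (zpow_sub_two_add_zpow_sub_three_le hw hw3 _))
  obtain h₂ | h₂ : 3 ≤ colNumOnes A c₂ ∨ colNumOnes A c₂ = 2 := by omega
  · exact of_abs_det_submatrix_le ((abs_det_submatrix_le_zpow (ih n le_rfl) A h01 hr₂).trans
      (zpow_le_zpow_right₀ hw (by omega)))
  by_cases hshared : ∃ i, i ≠ r ∧ A i c₁ = 1 ∧ A i c₂ = 1
  · obtain ⟨i, hi, hi₁, hi₂⟩ := hshared
    rw [det_eq_zero_of_colNumOnes_eq_two A h01 hc (by omega) h₂ hi.symm hr₁ hr₂ hi₁ hi₂,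
      abs_zero]
    positivity
  push Not at hshared
  refine of_abs_det_submatrix_le (abs_det_submatrix_le_of_colNumOnes_eq_two hw ih A h01 hrows hc
    hr₁ hr₂ hr (by omega) h₂ fun i hi hi₁ => ?_)
  exact (h01 i c₂).resolve_right (hshared i hi hi₁)

lemma abs_det_le_of_rowNumOnes_le_two (hw : 1 ≤ w) (hw3 : w + 1 ≤ w ^ 3)
    (ih : ∀ m ≤ n, DetBound w m) (A : Matrix (Fin (n + 1)) (Fin (n + 1)) ℝ)
    (h01 : ∀ i j, A i j = 0 ∨ A i j = 1) {r : Fin (n + 1)} (hr : rowNumOnes A r ≤ 2) :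
    |A.det| ≤ w ^ ((numOnes A : ℤ) - (n + 1 : ℕ)) := by
  by_cases hzero : ∃ i, rowNumOnes A i = 0
  · obtain ⟨i, hi⟩ := hzero
    have hi' (j : Fin (n + 1)) : A i j = 0 :=
      (h01 i j).resolve_right fun h => (card_pos.2 ⟨j, mem_filter.2 ⟨mem_univ j, h⟩⟩).ne' hi
    rw [det_eq_zero_of_row_eq_zero i hi', abs_zero]
    positivity
  by_cases hone : ∃ i, rowNumOnes A i = 1
  · obtain ⟨i, hi⟩ := hone
    refine (abs_det_le_rowNumOnes_mul_zpow hw (ih n le_rfl) A h01 i (g := 1)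
      fun j hj => colNumOnes_pos hj).trans ?_
    rw [hi, Nat.cast_one, one_mul]
    exact zpow_le_zpow_right₀ hw (by omega)
  push Not at hzero hone
  have hrows (i : Fin (n + 1)) : 2 ≤ rowNumOnes A i := by
    have := hzero i
    have := hone i
    omega
  exact abs_det_le_of_rowNumOnes_eq_two hw hw3 ih A h01 hrows (le_antisymm hr (hrows r))

lemma abs_det_le_of_forall_three_le (hw : 1 ≤ w)
    (hwk : ∀ k : ℕ, 3 ≤ k → (k : ℝ) ≤ w ^ (k + 1))
    (ih : DetBound w n) (A : Matrix (Fin (n + 1)) (Fin (n + 1)) ℝ)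
    (h01 : ∀ i j, A i j = 0 ∨ A i j = 1) (hrows : ∀ i, 3 ≤ rowNumOnes A i)
    (hcols : ∀ j, 3 ≤ colNumOnes A j) :
    |A.det| ≤ w ^ ((numOnes A : ℤ) - (n + 1 : ℕ)) := by
  have hw0 : w ≠ 0 := by positivity
  set k := rowNumOnes A 0
  calc |A.det| ≤ k * w ^ ((numOnes A : ℤ) + 1 - k - 3 - n) :=
        abs_det_le_rowNumOnes_mul_zpow hw ih A h01 0 fun j _ => hcols j
    _ ≤ w ^ (k + 1) * w ^ ((numOnes A : ℤ) + 1 - k - 3 - n) := by gcongr; exact hwk k (hrows 0)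
    _ = w ^ ((numOnes A : ℤ) - (n + 1 : ℕ)) := by
        rw [← zpow_natCast, ← zpow_add₀ hw0]; push_cast; ring_nf

theorem detBound (hw : 1 ≤ w) (hw3 : w + 1 ≤ w ^ 3)
    (hwk : ∀ k : ℕ, 3 ≤ k → (k : ℝ) ≤ w ^ (k + 1)) (n : ℕ) : DetBound w n := by
  induction n using Nat.strong_induction_on with
  | _ n ih =>
  cases n with
  | zero => intro A _; simp [numOnes]
  | succ n =>
  intro A h01
  have ih' (m : ℕ) (hm : m ≤ n) : DetBound w m := ih m (by omega)
  by_cases hrow : ∃ r, rowNumOnes A r ≤ 2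
  · obtain ⟨r, hr⟩ := hrow
    exact abs_det_le_of_rowNumOnes_le_two hw hw3 ih' A h01 hr
  by_cases hcol : ∃ c, colNumOnes A c ≤ 2
  · obtain ⟨c, hc⟩ := hcol
    have h := abs_det_le_of_rowNumOnes_le_two hw hw3 ih' Aᵀ (fun i j => h01 j i) hc
    rwa [det_transpose, numOnes_transpose] at h
  push Not at hrow hcol
  exact abs_det_le_of_forall_three_le hw hwk (ih n n.lt_succ_self) A h01 hrow hcol

end Matrix

/-- If `A` is an `n × n` matrix with all entries in `{0,1}` that contains at most `2n`
nonzero entries (i.e. at most `2n` ones), then `|det A| ≤ 2^(n/6) · 3^(n/6)`. -/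
theorem abs_det_le_of_le_two_n_ones (n : ℕ) (A : Matrix (Fin n) (Fin n) ℝ)
    (h01 : ∀ i j, A i j = 0 ∨ A i j = 1)
    (hcard : (Finset.univ.filter fun p : Fin n × Fin n => A p.1 p.2 = 1).card ≤ 2 * n) :
    |A.det| ≤ 2 ^ ((n : ℝ) / 6) * 3 ^ ((n : ℝ) / 6) := by
  set w : ℝ := 6 ^ (1 / 6 : ℝ)
  have hw0 : 0 ≤ w := by positivity
  have hw1 : 1 ≤ w := Real.one_le_rpow (by norm_num) (by norm_num)
  have hw6 : w ^ 6 = 6 := by rw [← Real.rpow_mul_natCast (by norm_num)]; norm_num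
  have hbound := Matrix.detBound hw1 (add_one_le_pow_three_of_pow_six_eq_six hw0 hw6)
    (fun _ hk => natCast_le_pow_succ_of_pow_six_eq_six hw0 hw6 hk) n A h01
  have hN : A.numOnes ≤ 2 * n := hcard
  calc |A.det| ≤ w ^ ((A.numOnes : ℤ) - n) := hbound
    _ ≤ w ^ (n : ℤ) := zpow_le_zpow_right₀ hw1 (by omega)
    _ = 2 ^ ((n : ℝ) / 6) * 3 ^ ((n : ℝ) / 6) := by
      rw [zpow_natCast, ← Real.rpow_mul_natCast (by norm_num),
        ← Real.mul_rpow (by norm_num) (by norm_num), one_div_mul_eq_div]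
      norm_num
end

section
/- If A is an n×n matrix with all entries in {0,1} such that every row of A contains at most two ones, then |det(A)| ≤ 2^(n/3). -/
/-!
Deleting a row or a column with at most one nonzero entry does not increase `|det|`, so by
induction one may assume that all rows, and then by double counting all columns, contain exactly
two ones. Let row `s` have its ones in columns `a` and `b`, and let `r` be the other row with a
one in column `a`, its second one lying in column `c`. If `b = c` these rows coincide. Otherwise
expand along column `a`: in the minor without row `s`, row `r` has lost its entry in column `a`
and column `b` its entry in row `s`, so two more deletions bring it down to size `n - 3`, and
symmetrically for the other minor. Thus `|det A| ≤ x + y` with `x ^ 3, y ^ 3 ≤ 2 ^ (n - 3)`,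
whence `|det A| ^ 3 ≤ 2 ^ n`.
-/

open scoped Classical

open Finset

theorem Finset.exists_ne_eq_pair_of_card_eq_two {α : Type*} [DecidableEq α] {s : Finset α}
    {a : α} (hs : #s = 2) (ha : a ∈ s) : ∃ b ≠ a, s = {a, b} := by
  obtain ⟨b, hb⟩ := card_eq_one.1 (by rw [card_erase_of_mem ha, hs] : #(s.erase a) = 1)
  refine ⟨b, ne_of_mem_erase (hb ▸ mem_singleton_self b), ?_⟩
  rw [← hb, insert_erase ha]

namespace Matrix

variable {ι κ ι' κ' R : Type*}

section Support

variable [Zero R]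

noncomputable def rowSupport [Fintype κ] (M : Matrix ι κ R) (i : ι) : Finset κ := {j | M i j ≠ 0}

noncomputable def colSupport [Fintype ι] (M : Matrix ι κ R) (j : κ) : Finset ι := Mᵀ.rowSupport j

@[simp]
theorem mem_rowSupport [Fintype κ] {M : Matrix ι κ R} {i : ι} {j : κ} :
    j ∈ M.rowSupport i ↔ M i j ≠ 0 := by
  simp [rowSupport]

@[simp]
theorem mem_colSupport [Fintype ι] {M : Matrix ι κ R} {i : ι} {j : κ} :
    i ∈ M.colSupport j ↔ M i j ≠ 0 :=
  mem_rowSupport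

theorem exists_forall_ne_eq_zero_of_card_rowSupport_le_one [Fintype κ] [Nonempty κ]
    {M : Matrix ι κ R} {i : ι} (h : #(M.rowSupport i) ≤ 1) : ∃ j, ∀ k ≠ j, M i k = 0 := by
  obtain hempty | ⟨j, hj⟩ := (M.rowSupport i).eq_empty_or_nonempty
  · exact ⟨Classical.arbitrary κ, fun k _ => by simpa using eq_empty_iff_forall_notMem.1 hempty k⟩
  · refine ⟨j, fun k hk => ?_⟩
    by_contra hne
    exact hk (card_le_one.1 h k (mem_rowSupport.2 hne) j hj)

theorem card_rowSupport_submatrix_le [Fintype κ] [Fintype κ'] (M : Matrix ι κ R) (f : ι' → ι)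
    {g : κ' → κ} (hg : g.Injective) (i : ι') :
    #((M.submatrix f g).rowSupport i) ≤ #(M.rowSupport (f i)) :=
  card_le_card_of_injOn g (fun _ hj => by simpa using hj) hg.injOn

theorem card_colSupport_submatrix_lt [Fintype ι] [Fintype ι'] (M : Matrix ι κ R) {f : ι' → ι}
    (hf : f.Injective) (g : κ' → κ) {x : ι} (hx : ∀ i, f i ≠ x) {j : κ'} (hxj : M x (g j) ≠ 0) :
    #((M.submatrix f g).colSupport j) < #(M.colSupport (g j)) := by
  calc #((M.submatrix f g).colSupport j)
      ≤ #((M.colSupport (g j)).erase x) :=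
        card_le_card_of_injOn f (fun i hi => by simpa [hx i] using hi) hf.injOn
    _ < #(M.colSupport (g j)) := card_erase_lt_of_mem (mem_colSupport.2 hxj)

theorem card_colSupport_eq_of_card_rowSupport_le [Fintype ι] (M : Matrix ι ι R) {k : ℕ}
    (hrow : ∀ i, #(M.rowSupport i) ≤ k) (hcol : ∀ j, k ≤ #(M.colSupport j)) (j : ι) :
    #(M.colSupport j) = k := by
  have hsum : ∑ j, #(M.colSupport j) = ∑ i, #(M.rowSupport i) := by
    simp only [colSupport, rowSupport, card_filter]
    exact sum_comm
  have hle : ∑ j, #(M.colSupport j) ≤ ∑ _j : ι, k :=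
    hsum.trans_le (sum_le_sum fun i _ => hrow i)
  exact ((sum_eq_sum_iff_of_le fun j _ => hcol j).1
    (le_antisymm (sum_le_sum fun j _ => hcol j) hle) j (mem_univ j)).symm

end Support

section Det

variable [CommRing R] [LinearOrder R] [IsStrictOrderedRing R] {n : ℕ}

theorem abs_det_le_sum_abs_mul_abs_det_submatrix (M : Matrix (Fin (n + 1)) (Fin (n + 1)) R)
    (j : Fin (n + 1)) :
    |M.det| ≤ ∑ i, |M i j| * |(M.submatrix i.succAbove j.succAbove).det| := by
  rw [det_succ_column M j]
  refine (abs_sum_le_sum_abs _ _).trans_eq (sum_congr rfl fun i _ => ?_)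
  simp [abs_mul]

theorem abs_det_le_abs_det_submatrix_of_col
    {M : Matrix (Fin (n + 1)) (Fin (n + 1)) R} {i j : Fin (n + 1)}
    (hcol : ∀ k ≠ i, M k j = 0) (hij : |M i j| ≤ 1) :
    |M.det| ≤ |(M.submatrix i.succAbove j.succAbove).det| := by
  calc |M.det| ≤ ∑ k, |M k j| * |(M.submatrix k.succAbove j.succAbove).det| :=
        abs_det_le_sum_abs_mul_abs_det_submatrix M j
    _ = |M i j| * |(M.submatrix i.succAbove j.succAbove).det| :=
        sum_eq_single i (fun k _ hk => by simp [hcol k hk]) (by simp)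
    _ ≤ |(M.submatrix i.succAbove j.succAbove).det| :=
        mul_le_of_le_one_left (abs_nonneg _) hij

theorem abs_det_le_abs_det_submatrix_of_row
    {M : Matrix (Fin (n + 1)) (Fin (n + 1)) R} {i j : Fin (n + 1)}
    (hrow : ∀ k ≠ j, M i k = 0) (hij : |M i j| ≤ 1) :
    |M.det| ≤ |(M.submatrix i.succAbove j.succAbove).det| := by
  have h := abs_det_le_abs_det_submatrix_of_col (M := Mᵀ) hrow hij
  rwa [det_transpose, ← transpose_submatrix, det_transpose] at h

end Det

structure IsBinaryTwoPerRow [Zero R] [One R] [Fintype κ] (M : Matrix ι κ R) : Prop where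
  eq_zero_or_eq_one : ∀ i j, M i j = 0 ∨ M i j = 1
  card_rowSupport_le : ∀ i, #(M.rowSupport i) ≤ 2

namespace IsBinaryTwoPerRow

section Basic

variable [Zero R] [One R] [Fintype κ] {M : Matrix ι κ R}

theorem submatrix [Fintype κ'] (hM : M.IsBinaryTwoPerRow) (f : ι' → ι) {g : κ' → κ}
    (hg : g.Injective) : (M.submatrix f g).IsBinaryTwoPerRow where
  eq_zero_or_eq_one i j := hM.eq_zero_or_eq_one (f i) (g j)
  card_rowSupport_le i := (M.card_rowSupport_submatrix_le f hg i).trans (hM.card_rowSupport_le _)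

theorem row_eq_of_rowSupport_eq (hM : M.IsBinaryTwoPerRow) {i i' : ι}
    (h : M.rowSupport i = M.rowSupport i') : M i = M i' := by
  funext j
  have hj : M i j ≠ 0 ↔ M i' j ≠ 0 := by rw [← mem_rowSupport, h, mem_rowSupport]
  rcases hM.eq_zero_or_eq_one i j with h₁ | h₁ <;> rcases hM.eq_zero_or_eq_one i' j with h₂ | h₂ <;>
    simp_all

end Basic

variable [CommRing R] [LinearOrder R] [IsStrictOrderedRing R] {m n : ℕ}

theorem abs_le_one [Fintype κ] {M : Matrix ι κ R} (hM : M.IsBinaryTwoPerRow) (i : ι) (j : κ) :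
    |M i j| ≤ 1 := by
  rcases hM.eq_zero_or_eq_one i j with h | h <;> simp [h]

theorem exists_abs_det_le_of_card_rowSupport_le_one {M : Matrix (Fin (m + 1)) (Fin (m + 1)) R}
    (hM : M.IsBinaryTwoPerRow) {i : Fin (m + 1)} (hi : #(M.rowSupport i) ≤ 1) :
    ∃ N : Matrix (Fin m) (Fin m) R, N.IsBinaryTwoPerRow ∧ |M.det| ≤ |N.det| := by
  obtain ⟨j, hj⟩ := exists_forall_ne_eq_zero_of_card_rowSupport_le_one hi
  exact ⟨_, hM.submatrix _ Fin.succAbove_right_injective,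
    abs_det_le_abs_det_submatrix_of_row hj (hM.abs_le_one i j)⟩

theorem exists_abs_det_le_of_card_colSupport_le_one {M : Matrix (Fin (m + 1)) (Fin (m + 1)) R}
    (hM : M.IsBinaryTwoPerRow) {j : Fin (m + 1)} (hj : #(M.colSupport j) ≤ 1) :
    ∃ N : Matrix (Fin m) (Fin m) R, N.IsBinaryTwoPerRow ∧ |M.det| ≤ |N.det| := by
  obtain ⟨i, hi⟩ := exists_forall_ne_eq_zero_of_card_rowSupport_le_one hj
  exact ⟨_, hM.submatrix _ Fin.succAbove_right_injective,
    abs_det_le_abs_det_submatrix_of_col hi (hM.abs_le_one i j)⟩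

theorem exists_abs_det_submatrix_le {M : Matrix (Fin (m + 3)) (Fin (m + 3)) R}
    (hM : M.IsBinaryTwoPerRow) {s r a b c : Fin (m + 3)} (hrs : r ≠ s) (hba : b ≠ a)
    (hbc : b ≠ c) (hca : c ≠ a) (hr : ∀ k, k ≠ a → k ≠ c → M r k = 0) (hsb : M s b ≠ 0)
    (hb : #(M.colSupport b) ≤ 2) :
    ∃ N : Matrix (Fin m) (Fin m) R, N.IsBinaryTwoPerRow ∧
      |(M.submatrix s.succAbove a.succAbove).det| ≤ |N.det| := by
  obtain ⟨r', rfl⟩ := Fin.exists_succAbove_eq hrs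
  obtain ⟨c', rfl⟩ := Fin.exists_succAbove_eq hca
  obtain ⟨b', rfl⟩ := Fin.exists_succAbove_eq hba
  obtain ⟨b'', rfl⟩ := Fin.exists_succAbove_eq fun h => hbc (congrArg a.succAbove h)
  set B := M.submatrix s.succAbove a.succAbove
  have hB : B.IsBinaryTwoPerRow := hM.submatrix _ Fin.succAbove_right_injective
  have hBr : ∀ k ≠ c', B r' k = 0 := fun k hk =>
    hr _ (Fin.succAbove_ne a k) fun h => hk (Fin.succAbove_right_injective h)
  have hC : #((B.submatrix r'.succAbove c'.succAbove).colSupport b'') ≤ 1 := by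
    have := M.card_colSupport_submatrix_lt (f := s.succAbove ∘ r'.succAbove)
      (Fin.succAbove_right_injective.comp Fin.succAbove_right_injective)
      (a.succAbove ∘ c'.succAbove) (fun i => Fin.succAbove_ne s _) hsb
    rw [submatrix_submatrix]
    exact Nat.lt_succ_iff.1 (this.trans_le hb)
  obtain ⟨N, hN, hle⟩ := (hB.submatrix r'.succAbove Fin.succAbove_right_injective)
    |>.exists_abs_det_le_of_card_colSupport_le_one hC
  exact ⟨N, hN, (abs_det_le_abs_det_submatrix_of_row hBr (hB.abs_le_one _ _)).trans hle⟩

theorem det_eq_zero_or_exists_abs_det_le_add {M : Matrix (Fin (n + 1)) (Fin (n + 1)) R}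
    (hM : M.IsBinaryTwoPerRow) (hrow : ∀ i, #(M.rowSupport i) = 2)
    (hcol : ∀ j, #(M.colSupport j) = 2) :
    M.det = 0 ∨ ∃ m, n = m + 2 ∧ ∃ N₁ N₂ : Matrix (Fin m) (Fin m) R,
      N₁.IsBinaryTwoPerRow ∧ N₂.IsBinaryTwoPerRow ∧ |M.det| ≤ |N₁.det| + |N₂.det| := by
  obtain ⟨a, b, hab, hs⟩ := card_eq_two.1 (hrow 0)
  have hs_off : ∀ k, k ≠ a → k ≠ b → M 0 k = 0 := fun k hka hkb => by
    simpa [hs, hka, hkb] using (mem_rowSupport (M := M) (i := 0) (j := k)).not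
  have hsa : M 0 a ≠ 0 := mem_rowSupport.1 (hs ▸ mem_insert_self a {b})
  have hsb : M 0 b ≠ 0 := mem_rowSupport.1 (hs ▸ mem_insert_of_mem (mem_singleton_self b))
  obtain ⟨r, hr0, ha⟩ := exists_ne_eq_pair_of_card_eq_two (hcol a) (mem_colSupport.2 hsa)
  have hra : M r a ≠ 0 := mem_colSupport.1 (ha ▸ mem_insert_of_mem (mem_singleton_self r))
  obtain ⟨c, hca, hr⟩ := exists_ne_eq_pair_of_card_eq_two (hrow r) (mem_rowSupport.2 hra)
  have hr_off : ∀ k, k ≠ a → k ≠ c → M r k = 0 := fun k hka hkc => by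
    simpa [hr, hka, hkc] using (mem_rowSupport (M := M) (i := r) (j := k)).not
  have hrc : M r c ≠ 0 := mem_rowSupport.1 (hr ▸ mem_insert_of_mem (mem_singleton_self c))
  obtain rfl | hbc := eq_or_ne b c
  · exact .inl (det_zero_of_row_eq hr0.symm (hM.row_eq_of_rowSupport_eq (hs.trans hr.symm)))
  obtain ⟨m, rfl⟩ : ∃ m, n = m + 2 := by
    have h3 := card_le_univ ({a, b, c} : Finset (Fin (n + 1)))
    rw [card_eq_three.2 ⟨a, b, c, hab, hca.symm, hbc, rfl⟩, Fintype.card_fin] at h3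
    exact ⟨n - 2, by omega⟩
  obtain ⟨N₁, hN₁, h₁⟩ := hM.exists_abs_det_submatrix_le hr0 hab.symm hbc hca hr_off hsb (hcol b).le
  obtain ⟨N₂, hN₂, h₂⟩ :=
    hM.exists_abs_det_submatrix_le hr0.symm hca hbc.symm hab.symm hs_off hrc (hcol c).le
  refine .inr ⟨m, rfl, N₁, N₂, hN₁, hN₂, ?_⟩
  calc |M.det| ≤ ∑ i, |M i a| * |(M.submatrix i.succAbove a.succAbove).det| :=
        abs_det_le_sum_abs_mul_abs_det_submatrix M a
    _ = ∑ i ∈ M.colSupport a, |M i a| * |(M.submatrix i.succAbove a.succAbove).det| :=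
        (sum_subset (subset_univ _) fun i _ hi => by simp [show M i a = 0 by simpa using hi]).symm
    _ = |M 0 a| * |(M.submatrix (0 : Fin (m + 3)).succAbove a.succAbove).det| +
          |M r a| * |(M.submatrix r.succAbove a.succAbove).det| := by
        rw [ha, sum_pair hr0.symm]
    _ ≤ |N₁.det| + |N₂.det| := by
        gcongr
        · exact (mul_le_of_le_one_left (abs_nonneg _) (hM.abs_le_one _ _)).trans h₁
        · exact (mul_le_of_le_one_left (abs_nonneg _) (hM.abs_le_one _ _)).trans h₂

theorem abs_det_pow_three_le {M : Matrix (Fin n) (Fin n) R} (hM : M.IsBinaryTwoPerRow) :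
    |M.det| ^ 3 ≤ 2 ^ n := by
  induction n using Nat.strong_induction_on with
  | _ n ih =>
  rcases n with _ | n
  · simp
  have of_abs_det_le {N : Matrix (Fin n) (Fin n) R} (hN : N.IsBinaryTwoPerRow)
      (h : |M.det| ≤ |N.det|) : |M.det| ^ 3 ≤ 2 ^ (n + 1) :=
    calc |M.det| ^ 3 ≤ |N.det| ^ 3 := pow_le_pow_left₀ (abs_nonneg _) h 3
      _ ≤ 2 ^ n := ih n n.lt_succ_self hN
      _ ≤ 2 ^ (n + 1) := pow_le_pow_right₀ one_le_two n.le_succ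
  by_cases hrow : ∃ i, #(M.rowSupport i) ≤ 1
  · obtain ⟨i, hi⟩ := hrow
    obtain ⟨N, hN, h⟩ := hM.exists_abs_det_le_of_card_rowSupport_le_one hi
    exact of_abs_det_le hN h
  by_cases hcol : ∃ j, #(M.colSupport j) ≤ 1
  · obtain ⟨j, hj⟩ := hcol
    obtain ⟨N, hN, h⟩ := hM.exists_abs_det_le_of_card_colSupport_le_one hj
    exact of_abs_det_le hN h
  simp only [not_exists, not_le] at hrow hcol
  have hrow₂ i : #(M.rowSupport i) = 2 := le_antisymm (hM.card_rowSupport_le i) (hrow i)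
  have hcol₂ := M.card_colSupport_eq_of_card_rowSupport_le hM.card_rowSupport_le hcol
  obtain h0 | ⟨m, rfl, N₁, N₂, hN₁, hN₂, h⟩ := hM.det_eq_zero_or_exists_abs_det_le_add hrow₂ hcol₂
  · simp [h0]
  calc |M.det| ^ 3 ≤ (|N₁.det| + |N₂.det|) ^ 3 := pow_le_pow_left₀ (abs_nonneg _) h 3
    _ ≤ 2 ^ 2 * (|N₁.det| ^ 3 + |N₂.det| ^ 3) := add_pow_le (abs_nonneg _) (abs_nonneg _) 3
    _ ≤ 2 ^ 2 * (2 ^ m + 2 ^ m) := by gcongr <;> exact ih m (by omega) ‹_›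
    _ = 2 ^ (m + 2 + 1) := by ring

end IsBinaryTwoPerRow

end Matrix

/-- If `A` is an `n × n` 0/1-matrix in which every row contains at most two ones,
then `|det A| ≤ 2^(n/3)`. -/
theorem abs_det_le_of_rows_at_most_two_ones (n : ℕ) (A : Matrix (Fin n) (Fin n) ℝ)
    (h01 : ∀ i j, A i j = 0 ∨ A i j = 1)
    (hrow : ∀ i, (Finset.univ.filter fun j => A i j = 1).card ≤ 2) :
    |A.det| ≤ 2 ^ ((n : ℝ) / 3) := by
  have hA : A.IsBinaryTwoPerRow := ⟨h01, fun i => by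
    convert hrow i using 2
    ext j
    rcases h01 i j with h | h <;> simp [Matrix.rowSupport, h]⟩
  calc |A.det| = (|A.det| ^ 3) ^ (3⁻¹ : ℝ) := by
        simpa using (Real.pow_rpow_inv_natCast (abs_nonneg A.det) three_ne_zero).symm
    _ ≤ ((2 : ℝ) ^ n) ^ (3⁻¹ : ℝ) := by gcongr; exact hA.abs_det_pow_three_le
    _ = 2 ^ ((n : ℝ) / 3) := by
        rw [← Real.rpow_natCast, ← Real.rpow_mul zero_le_two, div_eq_mul_inv]
end

section
/- Let I be an m×n matrix with all entries in {0,1} that contains exactly two ones in each row. Then det(I·Iᵀ) ≤ 2^m if m ≤ n/2, and det(I·Iᵀ) ≤ 2^((n+m)/3) if m ≥ n/2. -/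
/-!
The rows `vᵢ` of `I` are indicator vectors of 2-sets of columns, i.e. the edges of a multigraph
whose vertices are the columns met by some edge, and `det (I * Iᵀ)` is their Gram determinant.
Deleting `vᵢ` from the family divides the Gram determinant by `dist (vᵢ, span of the others)²`
(a Schur complement), which is at most `‖vᵢ - c • vⱼ‖²` for any other row `vⱼ`. With `c = 0`
this is Hadamard's inequality, `det (I * Iᵀ) ≤ ∏ ‖vᵢ‖² = 2 ^ m`.

For the second bound we induct on the number of edges, bounding the determinant by
`2 ^ ((#vertices + #edges) / 3)`. An edge with a vertex of degree one is deleted: if its other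
vertex lies on an edge `vⱼ`, then `‖vᵢ - vⱼ / 2‖² = 3 / 2 ≤ 2 ^ (2 / 3)` and one vertex
disappears; otherwise the factor is `2` and two vertices disappear. If no vertex has degree one,
either the rows are dependent (a repeated edge, or more edges than vertices) or every vertex has
degree exactly two. Then `G = I * Iᵀ` has nonnegative entries and row sums `4`, so its
eigenvalues lie in `[0, 4]`, and `tr G = 2m`, `tr G² = 6m`. The quadratic
`q t = (t - 1) - β (t - 1)²` with `β = (3 - 2 log 2) / 9` touches `log` at `1` and meets it at
`4`, so `log t ≤ q t` on `(0, 4]` and `log det G ≤ ∑ q λ = (2m / 3) log 2`.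
-/

open scoped Classical
open Matrix

open Finset

theorem card_subtype_ne_add_one {ι : Type*} [Fintype ι] [DecidableEq ι] (i : ι) :
    Fintype.card {a // a ≠ i} + 1 = Fintype.card ι := by
  rw [Fintype.card_subtype_compl, Fintype.card_subtype_eq]
  have := Fintype.card_pos_iff.2 ⟨i⟩
  omega

section GramDeterminant

variable {ι E : Type*} [Fintype ι] [DecidableEq ι] [NormedAddCommGroup E]
  [InnerProductSpace ℝ E]

theorem det_gram_le_det_gram_mul_norm_sq (v : ι → E) (i : ι) :
    (gram ℝ v).det ≤ (gram ℝ fun a : {a // a ≠ i} => v a).det * ‖v i‖ ^ 2 := by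
  set v' := fun a : {a // a ≠ i} => v a
  by_cases h : (gram ℝ v').det = 0
  · have hv : (gram ℝ v).det = 0 := by
      by_contra hv
      exact det_gram_ne_zero_iff_linearIndependent.2
        ((det_gram_ne_zero_iff_linearIndependent.1 hv).comp _ Subtype.val_injective) h
    rw [hv, h, zero_mul]
  have hA : (gram ℝ v').PosDef := posDef_gram_of_linearIndependent
    (det_gram_ne_zero_iff_linearIndependent.1 h)
  let := invertibleOfIsUnitDet _ (isUnit_iff_ne_zero.2 h)
  let B : Matrix {a // a ≠ i} {a // ¬a ≠ i} ℝ := of fun a b => inner ℝ (v a) (v b)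
  let D : Matrix {a // ¬a ≠ i} {a // ¬a ≠ i} ℝ := of fun a b => inner ℝ (v a) (v b)
  have hblock : (gram ℝ v).submatrix (Equiv.sumCompl (· ≠ i)) (Equiv.sumCompl (· ≠ i)) =
      fromBlocks (gram ℝ v') B Bᴴ D := by
    ext (a | a) (b | b) <;> simp [B, D, v', real_inner_comm]
  let i' : {a // ¬a ≠ i} := ⟨i, not_not.2 rfl⟩
  have : Subsingleton {a // ¬a ≠ i} := ⟨fun a b => Subtype.ext (by grind)⟩
  rw [← det_submatrix_equiv_self (Equiv.sumCompl (· ≠ i)), hblock, det_fromBlocks₁₁,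
    det_eq_elem_of_subsingleton _ i', invOf_eq_nonsing_inv, Matrix.sub_apply]
  have hq := (hA.posSemidef.inv.conjTranspose_mul_mul_same B).diag_nonneg (i := i')
  simp only [D, of_apply, real_inner_self_eq_norm_sq]
  exact mul_le_mul_of_nonneg_left (sub_le_self _ hq) hA.posSemidef.det_nonneg

theorem det_gram_update_add_smul_self (v : ι → E) {i j : ι} (hij : i ≠ j) (c : ℝ) :
    (gram ℝ (Function.update v i (v i + c • v j))).det = (gram ℝ v).det := by
  set M := (gram ℝ v).updateRow i ((gram ℝ v) i + c • (gram ℝ v) j)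
  have hM : gram ℝ (Function.update v i (v i + c • v j)) =
      M.updateCol i (fun a => M a i + c • M a j) := by
    ext a b
    simp only [gram_apply, M, updateRow_apply, updateCol_apply, Function.update_apply]
    split_ifs <;> simp only [inner_add_left, inner_add_right, inner_smul_left, inner_smul_right,
      gram_apply, Pi.add_apply, Pi.smul_apply, smul_eq_mul, RCLike.conj_to_real]
  rw [hM, det_updateCol_add_smul_self _ hij, det_updateRow_add_smul_self _ hij]

theorem det_gram_le_det_gram_mul_norm_sub_smul_sq (v : ι → E) {i j : ι} (hji : j ≠ i)
    (c : ℝ) :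
    (gram ℝ v).det ≤ (gram ℝ fun a : {a // a ≠ i} => v a).det * ‖v i - c • v j‖ ^ 2 := by
  have h := det_gram_le_det_gram_mul_norm_sq (Function.update v i (v i + (-c) • v j)) i
  have hrest : (fun a : {a // a ≠ i} => Function.update v i (v i + (-c) • v j) a) =
      fun a : {a // a ≠ i} => v a :=
    funext fun a => Function.update_of_ne a.2 _ _
  rwa [det_gram_update_add_smul_self v hji.symm, hrest, Function.update_self, neg_smul,
    ← sub_eq_add_neg] at h

theorem det_gram_le_prod_norm_sq (v : ι → E) : (gram ℝ v).det ≤ ∏ i, ‖v i‖ ^ 2 := by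
  induction h : Fintype.card ι generalizing ι with
  | zero =>
    have := Fintype.card_eq_zero_iff.1 h
    simp
  | succ m ih =>
    obtain ⟨i⟩ : Nonempty ι := Fintype.card_pos_iff.1 (by omega)
    rw [Fintype.prod_eq_mul_prod_subtype_ne _ i, mul_comm]
    refine (det_gram_le_det_gram_mul_norm_sq v i).trans ?_
    gcongr
    exact ih (fun a : {a // a ≠ i} => v a) (by have := card_subtype_ne_add_one i; omega)

theorem det_gram_eq_zero_of_not_injective {v : ι → E} (hv : ¬ Function.Injective v) :
    (gram ℝ v).det = 0 := by
  by_contra h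
  exact hv (det_gram_ne_zero_iff_linearIndependent.1 h).injective

theorem det_gram_eq_zero_of_finrank_lt {v : ι → E} {W : Submodule ℝ E} [FiniteDimensional ℝ W]
    (hv : ∀ i, v i ∈ W) (hW : Module.finrank ℝ W < Fintype.card ι) : (gram ℝ v).det = 0 := by
  by_contra h
  have hli : LinearIndependent ℝ fun i => (⟨v i, hv i⟩ : W) :=
    LinearIndependent.of_comp W.subtype (det_gram_ne_zero_iff_linearIndependent.1 h)
  exact hW.not_ge hli.fintype_card_le_finrank

end GramDeterminant

section LogBound
open Real

theorem hasDerivAt_sub_one_sub_mul_sq_sub_log (β : ℝ) {x : ℝ} (hx : 0 < x) :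
    HasDerivAt (fun x => (x - 1) - β * (x - 1) ^ 2 - log x)
      ((x - 1) * (1 - 2 * β * x) / x) x := by
  have h1 : HasDerivAt (fun x : ℝ => x - 1) 1 x := (hasDerivAt_id x).sub_const 1
  refine ((h1.fun_sub ((h1.fun_pow 2).const_mul β)).fun_sub
    (hasDerivAt_log hx.ne')).congr_deriv ?_
  field_simp
  ring

theorem le_of_hasDerivAt_of_nonneg {f f' : ℝ → ℝ} {a b : ℝ} (hab : a ≤ b)
    (hf : ∀ x ∈ Set.Icc a b, HasDerivAt f (f' x) x) (hf' : ∀ x ∈ Set.Ioo a b, 0 ≤ f' x) :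
    f a ≤ f b :=
  monotoneOn_of_hasDerivWithinAt_nonneg (convex_Icc a b)
    (fun x hx => (hf x hx).continuousAt.continuousWithinAt)
    (fun x hx => (hf x (interior_subset hx)).hasDerivWithinAt) (by rwa [interior_Icc])
    ⟨le_rfl, hab⟩ ⟨hab, le_rfl⟩ hab

theorem le_of_hasDerivAt_of_nonpos {f f' : ℝ → ℝ} {a b : ℝ} (hab : a ≤ b)
    (hf : ∀ x ∈ Set.Icc a b, HasDerivAt f (f' x) x) (hf' : ∀ x ∈ Set.Ioo a b, f' x ≤ 0) :
    f b ≤ f a :=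
  neg_le_neg_iff.1 <| le_of_hasDerivAt_of_nonneg (f := -f) hab (fun x hx => (hf x hx).neg)
    fun x hx => neg_nonneg.2 (hf' x hx)

theorem log_le_sub_one_sub_mul_sq_of_le_four {t : ℝ} (ht0 : 0 < t) (ht4 : t ≤ 4) :
    log t ≤ (t - 1) - (3 - 2 * log 2) / 9 * (t - 1) ^ 2 := by
  set β := (3 - 2 * log 2) / 9 with hβ
  have hβ0 : 0 < 2 * β := by have := log_two_lt_d9; norm_num at this; linarith
  have hβ1 : 2 * β < 1 := by have := log_pos one_lt_two; linarith
  set f : ℝ → ℝ := fun x => (x - 1) - β * (x - 1) ^ 2 - log x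
  suffices 0 ≤ f t by simp only [f] at this; linarith
  have hf1 : f 1 = 0 := by simp [f]
  have hf4 : f 4 = 0 := by
    have : log 4 = 2 * log 2 := by
      rw [show (4 : ℝ) = 2 ^ 2 by norm_num, log_pow]; norm_num
    simp only [f, this, hβ]; ring
  have hf : ∀ a b, 0 < a → ∀ x ∈ Set.Icc a b,
      HasDerivAt f ((x - 1) * (1 - 2 * β * x) / x) x := fun a b ha x hx =>
    hasDerivAt_sub_one_sub_mul_sq_sub_log β (ha.trans_le hx.1)
  -- `f` decreases to `f 1 = 0`, increases up to `x = 1 / (2 β)`, then decreases to `f 4 = 0`.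
  rcases le_total t 1 with ht1 | ht1
  · refine hf1 ▸ le_of_hasDerivAt_of_nonpos ht1 (hf t 1 ht0) fun x hx =>
      div_nonpos_of_nonpos_of_nonneg ?_ (ht0.trans hx.1).le
    exact mul_nonpos_of_nonpos_of_nonneg (by linarith [hx.2]) (by nlinarith [hx.1, hx.2])
  rcases le_total (2 * β * t) 1 with htβ | htβ
  · refine hf1 ▸ le_of_hasDerivAt_of_nonneg ht1 (hf 1 t one_pos) fun x hx =>
      div_nonneg ?_ (by linarith [hx.1])
    exact mul_nonneg (by linarith [hx.1]) (by nlinarith [hx.2])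
  · refine hf4 ▸ le_of_hasDerivAt_of_nonpos ht4 (hf t 4 ht0) fun x hx =>
      div_nonpos_of_nonpos_of_nonneg ?_ (ht0.trans hx.1).le
    exact mul_nonpos_of_nonneg_of_nonpos (by nlinarith [hx.1]) (by nlinarith [hx.1])

theorem prod_le_two_rpow_of_sum_eq_of_sum_sq_eq {ι : Type*} [Fintype ι] (t : ι → ℝ)
    (h0 : ∀ i, 0 ≤ t i) (h4 : ∀ i, t i ≤ 4) (h1 : ∑ i, t i = 2 * Fintype.card ι)
    (h2 : ∑ i, t i ^ 2 = 6 * Fintype.card ι) :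
    ∏ i, t i ≤ 2 ^ (2 * Fintype.card ι / 3 : ℝ) := by
  set q : ℝ → ℝ := fun x => (x - 1) - (3 - 2 * log 2) / 9 * (x - 1) ^ 2
  have hle : ∀ i, t i ≤ exp (q (t i)) := fun i => by
    rcases (h0 i).eq_or_lt with h | h
    · rw [← h]; exact (exp_pos _).le
    · exact (log_le_iff_le_exp h).1 (log_le_sub_one_sub_mul_sq_of_le_four h (h4 i))
  have hsum : ∑ i, q (t i) = log 2 * (2 * Fintype.card ι / 3) := by
    simp only [q, sub_sq, sum_sub_distrib, sum_add_distrib, ← mul_sum, ← sum_mul, h1, h2,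
      sum_const, card_univ, nsmul_eq_mul]
    ring
  calc ∏ i, t i ≤ ∏ i, exp (q (t i)) := prod_le_prod (fun i _ => h0 i) fun i _ => hle i
    _ = 2 ^ (2 * Fintype.card ι / 3 : ℝ) := by
      rw [← exp_sum, hsum, rpow_def_of_pos two_pos]

theorem le_two_rpow_of_le_mul {d d' F x y z : ℝ} (hd : d ≤ d' * F) (hd' : d' ≤ 2 ^ x)
    (hF0 : 0 ≤ F) (hF : F ≤ 2 ^ y) (hz : x + y ≤ z) : d ≤ 2 ^ z :=
  calc d ≤ d' * F := hd
    _ ≤ 2 ^ x * 2 ^ y := mul_le_mul hd' hF hF0 (by positivity)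
    _ = 2 ^ (x + y) := (rpow_add two_pos x y).symm
    _ ≤ 2 ^ z := rpow_le_rpow_of_exponent_le one_le_two hz

theorem three_halves_le_two_rpow : (3 / 2 : ℝ) ≤ 2 ^ (2 / 3 : ℝ) := by
  have h : ((2 : ℝ) ^ (2 / 3 : ℝ)) ^ 3 = 4 := by
    rw [← rpow_natCast, ← rpow_mul two_pos.le]; norm_num
  exact le_of_pow_le_pow_left₀ three_ne_zero (by positivity) (by rw [h]; norm_num)

end LogBound

namespace Matrix

theorem mul_transpose_self_eq_gram {ι κ : Type*} [Fintype κ] (A : Matrix ι κ ℝ) :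
    A * Aᵀ = gram ℝ fun i => WithLp.toLp 2 (A i) := by
  ext i i'
  simp [mul_apply, PiLp.inner_apply, mul_comm]

variable {ι : Type*} [Fintype ι] [DecidableEq ι] {G : Matrix ι ι ℝ}

theorem IsHermitian.eigenvalues_le_of_sum_abs_le (hG : G.IsHermitian) {c : ℝ}
    (h : ∀ i, ∑ j, |G i j| ≤ c) (k : ι) : hG.eigenvalues k ≤ c := by
  have hμ : Module.End.HasEigenvalue (toLin' G) (hG.eigenvalues k) :=
    Module.End.hasEigenvalue_iff_mem_spectrum.2
      (by rw [spectrum_toLin']; exact hG.eigenvalues_mem_spectrum_real k)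
  obtain ⟨i, hi⟩ := eigenvalue_mem_ball hμ
  rw [Metric.mem_closedBall, Real.dist_eq] at hi
  simp only [Real.norm_eq_abs] at hi
  have hsum := add_sum_erase univ (fun j => |G i j|) (mem_univ i)
  linarith [le_abs_self (hG.eigenvalues k - G i i), le_abs_self (G i i), h i]

theorem IsHermitian.trace_mul_self_eq_sum_eigenvalues_sq (hG : G.IsHermitian) :
    (G * G).trace = ∑ i, hG.eigenvalues i ^ 2 := by
  conv_lhs => rw [hG.spectral_theorem, ← map_mul, Unitary.conjStarAlgAut_apply, trace_mul_cycle,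
    Unitary.coe_star_mul_self, one_mul, diagonal_mul_diagonal, trace_diagonal]
  simp [sq]

theorem PosSemidef.det_le_two_rpow (hG : G.PosSemidef) (h4 : ∀ i, ∑ j, |G i j| ≤ 4)
    (h1 : G.trace = 2 * Fintype.card ι) (h2 : (G * G).trace = 6 * Fintype.card ι) :
    G.det ≤ 2 ^ (2 * Fintype.card ι / 3 : ℝ) := by
  rw [hG.1.det_eq_prod_eigenvalues]
  refine prod_le_two_rpow_of_sum_eq_of_sum_sq_eq _ hG.eigenvalues_nonneg
    (hG.1.eigenvalues_le_of_sum_abs_le h4) ?_ ?_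
  · simpa [hG.1.trace_eq_sum_eigenvalues] using h1
  · simpa [hG.1.trace_mul_self_eq_sum_eigenvalues_sq] using h2

end Matrix

section FinsetFamily

variable {ι κ : Type*} [Fintype ι] [DecidableEq κ]

theorem sum_card_inter_eq_sum_card_filter_mem (s : Finset κ) (e : ι → Finset κ) :
    ∑ i, #(s ∩ e i) = ∑ j ∈ s, #{i | j ∈ e i} := by
  have := sum_card_bipartiteAbove_eq_sum_card_bipartiteBelow (s := univ) (t := s)
    (r := fun i j => j ∈ e i)
  simpa only [bipartiteAbove, bipartiteBelow, filter_mem_eq_inter] using this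

theorem card_filter_mem_eq_two_of_two_le (e : ι → Finset κ) (he : ∀ i, #(e i) = 2)
    (hdeg : ∀ j ∈ univ.biUnion e, 2 ≤ #{i | j ∈ e i})
    (hcard : Fintype.card ι ≤ #(univ.biUnion e)) :
    ∀ j ∈ univ.biUnion e, #{i | j ∈ e i} = 2 := by
  have hsum : ∑ j ∈ univ.biUnion e, #{i | j ∈ e i} = ∑ _j ∈ univ.biUnion e, 2 := by
    refine le_antisymm ?_ (sum_le_sum hdeg)
    rw [← sum_card_inter_eq_sum_card_filter_mem]
    simp only [inter_eq_right.2 (subset_biUnion_of_mem e (mem_univ _)), he, sum_const, card_univ,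
      smul_eq_mul]
    omega
  intro j hj
  exact ((sum_eq_sum_iff_of_le hdeg).1 hsum.symm j hj).symm

theorem two_le_card_filter_mem (e : ι → Finset κ) (h : ∀ i, ∀ j ∈ e i, ∃ i' ≠ i, j ∈ e i') :
    ∀ j ∈ univ.biUnion e, 2 ≤ #{i | j ∈ e i} := fun j hj => by
  obtain ⟨i, -, hji⟩ := mem_biUnion.1 hj
  obtain ⟨i', hi', hji'⟩ := h i j hji
  calc 2 = #{i, i'} := (card_pair hi'.symm).symm
    _ ≤ _ := card_le_card fun a ha => by
      rcases mem_insert.1 ha with rfl | ha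
      · simpa using hji
      · rw [mem_singleton.1 ha]; simpa using hji'

variable [DecidableEq ι]

theorem card_biUnion_subtype_ne_add_one_le (e : ι → Finset κ) {i : ι} {j : κ} (hj : j ∈ e i)
    (h : ∀ i' ≠ i, j ∉ e i') :
    #(univ.biUnion fun a : {a // a ≠ i} => e a) + 1 ≤ #(univ.biUnion e) := by
  have hsub : (univ.biUnion fun a : {a // a ≠ i} => e a) ⊆ (univ.biUnion e).erase j :=
    biUnion_subset.2 fun a _ k hk =>
      mem_erase.2 ⟨fun hkj => h a a.2 (hkj ▸ hk), mem_biUnion.2 ⟨a, mem_univ _, hk⟩⟩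
  have hjU : j ∈ univ.biUnion e := mem_biUnion.2 ⟨i, mem_univ i, hj⟩
  have := card_le_card hsub
  rw [card_erase_of_mem hjU] at this
  have := card_pos.2 ⟨j, hjU⟩
  omega

theorem card_biUnion_subtype_ne_add_card_le (e : ι → Finset κ) {i : ι}
    (h : ∀ i' ≠ i, Disjoint (e i) (e i')) :
    #(univ.biUnion fun a : {a // a ≠ i} => e a) + #(e i) ≤ #(univ.biUnion e) := by
  rw [← card_union_of_disjoint ((disjoint_biUnion_left (univ : Finset {a // a ≠ i})
    (fun a => e a) (e i)).2 fun a _ => (h a a.2).symm)]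
  exact card_le_card (union_subset (biUnion_subset.2 fun a _ =>
    subset_biUnion_of_mem e (mem_univ _)) (subset_biUnion_of_mem e (mem_univ i)))

end FinsetFamily

section Incidence

variable {κ : Type*} [Fintype κ] [DecidableEq κ]

def indicatorVec (s : Finset κ) : EuclideanSpace ℝ κ :=
  WithLp.toLp 2 fun j => if j ∈ s then 1 else 0

theorem inner_indicatorVec (s t : Finset κ) :
    inner ℝ (indicatorVec s) (indicatorVec t) = (#(s ∩ t) : ℝ) := by
  simp [indicatorVec, PiLp.inner_apply]

theorem norm_indicatorVec_sq (s : Finset κ) : ‖indicatorVec s‖ ^ 2 = #s := by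
  rw [← real_inner_self_eq_norm_sq, inner_indicatorVec, inter_self]

theorem indicatorVec_mem_span {s U : Finset κ} (hs : s ⊆ U) :
    indicatorVec s ∈ Submodule.span ℝ
      (↑(U.image fun j => EuclideanSpace.single j (1 : ℝ)) : Set (EuclideanSpace ℝ κ)) := by
  have : indicatorVec s = ∑ j ∈ s, EuclideanSpace.single j (1 : ℝ) := by
    ext k
    simp [indicatorVec]
  rw [this]
  exact Submodule.sum_mem _ fun j hj =>
    Submodule.subset_span (mem_coe.2 (mem_image_of_mem _ (hs hj)))

variable {ι : Type*} [Fintype ι] [DecidableEq ι]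

theorem det_gram_indicatorVec_eq_zero_of_card_lt (e : ι → Finset κ)
    (h : #(univ.biUnion e) < Fintype.card ι) :
    (gram ℝ fun i => indicatorVec (e i)).det = 0 :=
  det_gram_eq_zero_of_finrank_lt
    (fun i => indicatorVec_mem_span (subset_biUnion_of_mem e (mem_univ i)))
    ((finrank_span_finset_le_card _).trans_lt (card_image_le.trans_lt h))

theorem det_gram_indicatorVec_le_of_card_filter_mem_eq_two (e : ι → Finset κ)
    (he : ∀ i, #(e i) = 2) (hinj : Function.Injective e)
    (hdeg : ∀ j ∈ univ.biUnion e, #{i | j ∈ e i} = 2) :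
    (gram ℝ fun i => indicatorVec (e i)).det ≤ 2 ^ (2 * Fintype.card ι / 3 : ℝ) := by
  set c : ι → ι → ℕ := fun i i' => #(e i ∩ e i')
  have hG : gram ℝ (fun i => indicatorVec (e i)) = of fun i i' => (c i i' : ℝ) := by
    ext i i'
    simp [c, inner_indicatorVec]
  have hrow : ∀ i, ∑ i', c i i' = 4 := fun i => by
    rw [sum_card_inter_eq_sum_card_filter_mem, sum_congr rfl fun j hj =>
      hdeg j (mem_biUnion.2 ⟨i, mem_univ i, hj⟩), sum_const, he, smul_eq_mul]
  have hoff : ∀ i i', i ≠ i' → c i i' ≤ 1 := fun i i' hii' => by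
    by_contra! h
    have h1 := eq_of_subset_of_card_le inter_subset_left (by rw [he]; exact h)
    have h2 := eq_of_subset_of_card_le inter_subset_right (by rw [he]; exact h)
    exact hii' (hinj (h1.symm.trans h2))
  have hsq : ∀ i, ∑ i', c i i' * c i' i = 6 := fun i => by
    have : ∀ i', c i i' * c i' i = c i i' + if i = i' then 2 else 0 := fun i' => by
      rw [show c i' i = c i i' from congrArg card (inter_comm _ _)]
      split_ifs with h
      · simp [c, h, he]
      · have := hoff i i' h
        interval_cases c i i' <;> rfl
    rw [sum_congr rfl fun i' _ => this i', sum_add_distrib, hrow, sum_ite_eq, if_pos (mem_univ _)]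
  have hpsd := posSemidef_gram ℝ fun i => indicatorVec (e i)
  rw [hG] at hpsd ⊢
  refine hpsd.det_le_two_rpow (fun i => ?_) ?_ ?_
  · simp only [of_apply, Nat.abs_cast]
    exact_mod_cast (hrow i).le
  · simp [trace, c, he, mul_comm]
  · simp only [trace, Matrix.diag, mul_apply, of_apply]
    exact_mod_cast (show ∑ i, ∑ i', c i i' * c i' i = 6 * Fintype.card ι by
      simp [hsq, mul_comm])

theorem det_gram_indicatorVec_le_of_pendant (e : ι → Finset κ) (he : ∀ i, #(e i) = 2)
    {i : ι} {j : κ} (hj : j ∈ e i) (hpend : ∀ i' ≠ i, j ∉ e i')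
    (hrest : (gram ℝ fun a : {a // a ≠ i} => indicatorVec (e a)).det ≤
      2 ^ ((#(univ.biUnion fun a : {a // a ≠ i} => e a) + Fintype.card {a // a ≠ i} : ℝ) / 3)) :
    (gram ℝ fun i => indicatorVec (e i)).det ≤
      2 ^ ((#(univ.biUnion e) + Fintype.card ι : ℝ) / 3) := by
  have hcard : (Fintype.card {a // a ≠ i} : ℝ) + 1 = Fintype.card ι := by
    exact_mod_cast card_subtype_ne_add_one i
  by_cases hdisj : ∀ i' ≠ i, Disjoint (e i) (e i')
  · have hU : (#(univ.biUnion fun a : {a // a ≠ i} => e a) : ℝ) + 2 ≤ #(univ.biUnion e) := by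
      exact_mod_cast he i ▸ card_biUnion_subtype_ne_add_card_le e hdisj
    refine le_two_rpow_of_le_mul (y := 1) (det_gram_le_det_gram_mul_norm_sq _ i) hrest
      (by positivity) (by rw [norm_indicatorVec_sq, he, Real.rpow_one]; norm_num) ?_
    linarith
  push Not at hdisj
  obtain ⟨i', hi', hmeet⟩ := hdisj
  have hinter : #(e i ∩ e i') = 1 := by
    refine le_antisymm ?_ (card_pos.2 (not_disjoint_iff_nonempty_inter.1 hmeet))
    calc #(e i ∩ e i') ≤ #((e i).erase j) := card_le_card fun k hk =>
          mem_erase.2 ⟨fun h => hpend i' hi' (h ▸ (mem_inter.1 hk).2), (mem_inter.1 hk).1⟩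
      _ = 1 := by rw [card_erase_of_mem hj, he]
  have hnorm : ‖indicatorVec (e i) - (1 / 2 : ℝ) • indicatorVec (e i')‖ ^ 2 = 3 / 2 := by
    rw [norm_sub_sq_real, inner_smul_right, norm_smul, mul_pow, norm_indicatorVec_sq,
      norm_indicatorVec_sq, inner_indicatorVec, he, he, hinter]
    norm_num
  have hU : (#(univ.biUnion fun a : {a // a ≠ i} => e a) : ℝ) + 1 ≤ #(univ.biUnion e) := by
    exact_mod_cast card_biUnion_subtype_ne_add_one_le e hj hpend
  refine le_two_rpow_of_le_mul (det_gram_le_det_gram_mul_norm_sub_smul_sq _ hi' _) hrest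
    (by rw [hnorm]; norm_num) (hnorm ▸ three_halves_le_two_rpow) ?_
  linarith

theorem det_gram_indicatorVec_le (e : ι → Finset κ) (he : ∀ i, #(e i) = 2) :
    (gram ℝ fun i => indicatorVec (e i)).det ≤
      2 ^ ((#(univ.biUnion e) + Fintype.card ι : ℝ) / 3) := by
  induction h : Fintype.card ι generalizing ι with
  | zero =>
    have := Fintype.card_eq_zero_iff.1 h
    rw [det_isEmpty]
    exact Real.one_le_rpow one_le_two (by positivity)
  | succ m ih =>
    rw [← h]
    by_cases hpend : ∃ i, ∃ j ∈ e i, ∀ i' ≠ i, j ∉ e i'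
    · obtain ⟨i, j, hj, hpend⟩ := hpend
      have hcard : Fintype.card {a // a ≠ i} = m := by
        have := card_subtype_ne_add_one i
        omega
      refine det_gram_indicatorVec_le_of_pendant e he hj hpend ?_
      rw [hcard]
      exact ih (fun a : {a // a ≠ i} => e a) (fun a => he a) hcard
    push Not at hpend
    rcases lt_or_ge #(univ.biUnion e) (Fintype.card ι) with hlt | hge
    · rw [det_gram_indicatorVec_eq_zero_of_card_lt e hlt]
      positivity
    by_cases hinj : Function.Injective e
    · refine (det_gram_indicatorVec_le_of_card_filter_mem_eq_two e he hinj
        (card_filter_mem_eq_two_of_two_le e he (two_le_card_filter_mem e hpend) hge)).trans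
        (Real.rpow_le_rpow_of_exponent_le one_le_two ?_)
      have : (Fintype.card ι : ℝ) ≤ #(univ.biUnion e) := by exact_mod_cast hge
      linarith
    · rw [det_gram_eq_zero_of_not_injective (v := fun i => indicatorVec (e i))
        fun hv => hinj (Function.Injective.of_comp (f := indicatorVec) hv)]
      positivity

end Incidence

/-- If `I` is an `m × n` 0/1-matrix with exactly two ones in each row, then
`det (I ⬝ Iᵀ) ≤ 2^m` when `m ≤ n/2`, and `det (I ⬝ Iᵀ) ≤ 2^((n+m)/3)` when `m ≥ n/2`. -/
theorem det_gram_le_of_two_ones_per_row (m n : ℕ) (I : Matrix (Fin m) (Fin n) ℝ)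
    (h01 : ∀ i j, I i j = 0 ∨ I i j = 1)
    (hrow : ∀ i, (Finset.univ.filter fun j => I i j = 1).card = 2) :
    ((m : ℝ) ≤ (n : ℝ) / 2 → (I * Iᵀ).det ≤ 2 ^ m) ∧
    ((n : ℝ) / 2 ≤ (m : ℝ) → (I * Iᵀ).det ≤ 2 ^ (((n : ℝ) + (m : ℝ)) / 3)) := by
  set e : Fin m → Finset (Fin n) := fun i => univ.filter fun j => I i j = 1
  have hI : I * Iᵀ = gram ℝ fun i => indicatorVec (e i) := by
    rw [mul_transpose_self_eq_gram]
    congr 1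
    ext i j
    rcases h01 i j with h | h <;> simp [indicatorVec, e, h]
  rw [hI]
  refine ⟨fun _ => ?_, fun _ => ?_⟩
  · calc _ ≤ ∏ i, ‖indicatorVec (e i)‖ ^ 2 := det_gram_le_prod_norm_sq _
      _ = 2 ^ m := by simp [norm_indicatorVec_sq, e, hrow]
  · refine (det_gram_indicatorVec_le e hrow).trans
      (Real.rpow_le_rpow_of_exponent_le one_le_two ?_)
    have : #(univ.biUnion e) ≤ n := (card_le_univ _).trans_eq (Fintype.card_fin n)
    rw [Fintype.card_fin]
    gcongr
end

section
/- If T is a tree on n ≥ 2 vertices and I ∈ {0,1}^{E(T)×V(T)} is the edge-vertex incidence matrix of T (an (n−1)×n matrix), then det(I·Iᵀ) = n, where I·Iᵀ is the (n−1)×(n−1) Gramian of the rows of I. -/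
/-!
Root the tree at a vertex `r` and match every other vertex `v` with the edge to its parent, the
neighbour one step closer to `r`. Splitting the incidence matrix as `I = [a | S]`, where `a` is the
column of `r` and `S` is square, `S` is unitriangular once vertices are ordered by depth, so
`det S = 1`. The alternating sign vector `ε v = (-1) ^ dist r v` lies in the kernel of `I`, hence
`a = -S ε₀` and `I Iᵀ = S (1 + ε₀ ε₀ᵀ) Sᵀ`. By the matrix determinant lemma,
`det (I Iᵀ) = 1 + ε₀ ⬝ᵥ ε₀ = 1 + (n - 1) = n`.
-/

open Matrix

namespace Matrix

variable {ι R : Type*} [Fintype ι] [DecidableEq ι] [CommRing R]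

theorem det_mul_transpose_of_mulVec_eq_zero (A : Matrix ι (Option ι) R) (ε : Option ι → R)
    (hA : A *ᵥ ε = 0) (hε : ε none = 1) :
    (A * Aᵀ).det = (A.submatrix id some).det ^ 2 * (1 + (ε ∘ some) ⬝ᵥ (ε ∘ some)) := by
  set A₀ := A.submatrix id some
  set u := ε ∘ some
  -- `A ε = 0` expresses the column `none` through the others: `A = A₀ * [-u | 1]`.
  let Q : Matrix ι (Option ι) R := of fun i o => o.elim (-u i) fun j => (1 : Matrix ι ι R) i j
  have hAQ : A = A₀ * Q := by
    ext i (_ | j)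
    · have hrow := congrFun hA i
      simp only [mulVec, dotProduct, Fintype.sum_option, hε, mul_one, Pi.zero_apply] at hrow
      simp [mul_apply, Q, u, A₀]
      linear_combination hrow
    · simp [mul_apply, Q, one_apply, A₀]
  have hQQ : Q * Qᵀ = 1 + replicateCol Unit u * replicateRow Unit u := by
    ext i k
    simp [mul_apply, Fintype.sum_option, Q, one_apply, add_comm]
  calc (A * Aᵀ).det = (A₀ * (Q * Qᵀ) * A₀ᵀ).det := by
        rw [hAQ, transpose_mul]
        simp only [Matrix.mul_assoc]
    _ = A₀.det ^ 2 * (1 + u ⬝ᵥ u) := by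
      rw [hQQ, det_mul, det_mul, det_transpose, det_one_add_replicateCol_mul_replicateRow]
      ring

theorem BlockTriangular.det_eq_one {m α : Type*} [Fintype m] [DecidableEq m] [LinearOrder α]
    {M : Matrix m m R} {b : m → α} (hM : M.BlockTriangular b)
    (hblock : ∀ i j, b i = b j → M i j = (1 : Matrix m m R) i j) : M.det = 1 := by
  rw [hM.det]
  refine Finset.prod_eq_one fun a _ => ?_
  have : M.toSquareBlock b a = 1 := by
    ext i j
    rw [toSquareBlock_def, of_apply, hblock i j (i.2.trans j.2.symm)]
    simp [one_apply, Subtype.ext_iff]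
  rw [this, det_one]

end Matrix

namespace SimpleGraph

variable {V : Type*} {G : SimpleGraph V}

theorem Connected.exists_adj_dist_eq_add_one (hG : G.Connected) {r v : V} (hv : v ≠ r) :
    ∃ w, G.Adj v w ∧ G.dist r v = G.dist r w + 1 := by
  obtain ⟨p, hp⟩ := hG.exists_walk_length_eq_dist v r
  cases p with
  | nil => exact absurd rfl hv
  | @cons _ w _ h q =>
    refine ⟨w, h, ?_⟩
    have hq := dist_le q
    have htri := hG.dist_triangle (u := v) (v := w) (w := r)
    rw [dist_eq_one_iff_adj.mpr h] at htri
    rw [Walk.length_cons] at hp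
    rw [dist_comm, dist_comm (u := r)]
    omega

namespace Connected

variable (hG : G.Connected) (r : V)

noncomputable def parent (v : {v // v ≠ r}) : V :=
  (hG.exists_adj_dist_eq_add_one v.2).choose

theorem adj_parent (v : {v // v ≠ r}) : G.Adj v (hG.parent r v) :=
  (hG.exists_adj_dist_eq_add_one v.2).choose_spec.1

theorem dist_parent (v : {v // v ≠ r}) : G.dist r v = G.dist r (hG.parent r v) + 1 :=
  (hG.exists_adj_dist_eq_add_one v.2).choose_spec.2

noncomputable def parentEdge (v : {v // v ≠ r}) : G.edgeSet :=
  ⟨s(v, hG.parent r v), hG.adj_parent r v⟩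

theorem parentEdge_injective : Function.Injective (hG.parentEdge r) := by
  intro v w hvw
  rcases Sym2.eq_iff.mp (congrArg Subtype.val hvw) with ⟨h, -⟩ | ⟨hv, hw⟩
  · exact Subtype.ext h
  · have hdv := hG.dist_parent r v
    have hdw := hG.dist_parent r w
    rw [hw] at hdv
    rw [← hv] at hdw
    omega

end Connected

variable [DecidableEq V]

theorem IsTree.bijective_parentEdge [Fintype V] [Fintype G.edgeSet] (hG : G.IsTree) (r : V) :
    Function.Bijective (hG.connected.parentEdge r) := by
  refine (Fintype.bijective_iff_injective_and_card _).2 ⟨hG.connected.parentEdge_injective r, ?_⟩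
  have := hG.card_edgeFinset
  rw [Fintype.card_subtype_compl, Fintype.card_subtype_eq, ← edgeFinset_card]
  omega

variable (R : Type*)

def edgeIncMatrix [Zero R] [One R] (G : SimpleGraph V) : Matrix G.edgeSet V R :=
  of fun e v => if v ∈ (e : Sym2 V) then 1 else 0

variable {R}

theorem edgeIncMatrix_mulVec_mk [Fintype V] [NonAssocSemiring R] (f : V → R) {u w : V}
    (h : s(u, w) ∈ G.edgeSet) : (G.edgeIncMatrix R *ᵥ f) ⟨s(u, w), h⟩ = f u + f w := by
  have hpair : (Finset.univ.filter fun v => v = u ∨ v = w) = {u, w} := by ext; simp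
  simp only [mulVec, dotProduct, edgeIncMatrix, of_apply, Sym2.mem_iff, ite_mul, one_mul,
    zero_mul, Finset.sum_ite, Finset.sum_const_zero, add_zero, hpair]
  exact Finset.sum_pair (G.mem_edgeSet.1 h).ne

theorem IsTree.edgeIncMatrix_mulVec_neg_one_pow_dist [Fintype V] [Ring R] (hG : G.IsTree)
    (r : V) : G.edgeIncMatrix R *ᵥ (fun v => (-1) ^ G.dist r v) = 0 := by
  ext ⟨e, he⟩
  induction e using Sym2.ind with
  | h u w =>
    rw [edgeIncMatrix_mulVec_mk, Pi.zero_apply]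
    rcases hG.dist_eq_dist_add_one_of_adj r (G.mem_edgeSet.1 he) with h | h <;> simp [h, pow_succ]

theorem Connected.det_edgeIncMatrix_submatrix_parentEdge [Fintype V] [CommRing R]
    (hG : G.Connected) (r : V) :
    ((G.edgeIncMatrix R).submatrix (hG.parentEdge r) Subtype.val).det = 1 := by
  have hmem (v w : {v // v ≠ r}) :
      (w : V) ∈ (hG.parentEdge r v : Sym2 V) ↔ w = v ∨ (w : V) = hG.parent r v := by
    simp [parentEdge, Subtype.ext_iff]
  refine BlockTriangular.det_eq_one (b := fun v => OrderDual.toDual (G.dist r v)) ?_ ?_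
  · intro v w hvw
    change G.dist r v < G.dist r w at hvw
    have := hG.dist_parent r v
    simp only [submatrix_apply, edgeIncMatrix, of_apply, ite_eq_right_iff, hmem]
    rintro (rfl | h)
    · exact absurd hvw (lt_irrefl _)
    · rw [h] at hvw
      omega
  · intro v w hvw
    have := hG.dist_parent r v
    simp only [submatrix_apply, edgeIncMatrix, of_apply, hmem, one_apply]
    by_cases h : (w : V) = hG.parent r v <;> simp_all [eq_comm]

end SimpleGraph

open scoped Classical

theorem det_gram_incidence_tree_general {V : Type} [Fintype V] [DecidableEq V] (n : ℕ)
    (T : SimpleGraph V) [DecidableRel T.Adj] (hT : T.IsTree)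
    (hn : Fintype.card V = n)
    (I : Matrix T.edgeSet V ℝ)
    (hI : ∀ (e : T.edgeSet) (v : V), I e v = if v ∈ (e : Sym2 V) then 1 else 0) :
    (I * Iᵀ).det = n := by
  obtain rfl : I = T.edgeIncMatrix ℝ := Matrix.ext hI
  obtain ⟨r⟩ := hT.connected.nonempty
  set ψ := Equiv.ofBijective _ (hT.bijective_parentEdge r)
  set φ := Equiv.optionSubtypeNe r
  set A := (T.edgeIncMatrix ℝ).submatrix ψ φ
  have hgram : A * Aᵀ = (T.edgeIncMatrix ℝ * (T.edgeIncMatrix ℝ)ᵀ).submatrix ψ ψ := by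
    rw [transpose_submatrix, submatrix_mul_equiv]
  have hsign : A *ᵥ ((fun v => (-1) ^ T.dist r v) ∘ φ) = 0 := by
    rw [submatrix_mulVec_equiv, Function.comp_assoc, φ.self_comp_symm, Function.comp_id,
      hT.edgeIncMatrix_mulVec_neg_one_pow_dist, Pi.zero_comp]
  have hsquare : (A.submatrix id some).det = 1 :=
    hT.connected.det_edgeIncMatrix_submatrix_parentEdge r
  have hcard : Fintype.card {v // v ≠ r} + 1 = n := by
    have := Fintype.card_pos_iff.2 ⟨r⟩
    rw [Fintype.card_subtype_compl, Fintype.card_subtype_eq]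
    omega
  rw [← det_submatrix_equiv_self ψ, ← hgram,
    det_mul_transpose_of_mulVec_eq_zero A _ hsign (by simp [φ]), hsquare]
  simp [dotProduct, ← mul_pow, ← hcard, add_comm]

/-- If `T` is a tree on `n ≥ 2` vertices and `I` is its edge-vertex incidence matrix,
then `det (I ⬝ Iᵀ) = n`. -/
theorem det_gram_incidence_tree {V : Type} [Fintype V] [DecidableEq V] (n : ℕ)
    (T : SimpleGraph V) [DecidableRel T.Adj] (hT : T.IsTree)
    (hn : Fintype.card V = n) (h2 : 2 ≤ n)
    (I : Matrix T.edgeSet V ℝ)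
    (hI : ∀ (e : T.edgeSet) (v : V), I e v = if v ∈ (e : Sym2 V) then 1 else 0) :
    (I * Iᵀ).det = n :=
  det_gram_incidence_tree_general n T hT hn I hI
end

section
/- If m and n are positive integers with m ≤ n/2, then there exists a matrix I ∈ {0,1}^{m×n} with exactly two ones in each row such that det(I·Iᵀ) = 2^m. If n/2 ≤ m ≤ n and 2m−n is divisible by 3, then there exists a matrix I ∈ {0,1}^{m×n} with exactly two ones in each row such that det(I·Iᵀ) = 2^((n+m)/3). -/
open scoped Classical
open Matrix

/-!
The witnesses are edge-vertex incidence matrices of disjoint unions of triangles, edges and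
isolated vertices. The Gramian of the incidence matrix of a disjoint union is block diagonal,
so its determinant is the product over the components: an edge contributes `det [2] = 2`, a
triangle `det (1 + J₃) = 4`, and an isolated vertex (a column with no rows) contributes `1`.
With `t` triangles, `s` edges and `z` isolated vertices there are `m = 3t + s` rows and
`n = 3t + 2s + z` columns, and the determinant is `4 ^ t * 2 ^ s = 2 ^ (2t + s)`; for `m ≤ n/2`
take `t = 0`, and for `3 ∣ 2m - n` take `t = (2m - n)/3`, `z = 0`, where `2t + s = (n + m)/3`.
-/

namespace Matrix

variable {l m n o m' n' R : Type*} [Fintype n] [Fintype n'] [Fintype o]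

/-- Stated with row sums rather than with the number of ones, so that it is stable under block
constructions. -/
def IsTwoOnesPerRow [AddCommMonoidWithOne R] (A : Matrix m n R) : Prop :=
  (∀ i j, A i j = 0 ∨ A i j = 1) ∧ ∀ i, ∑ j, A i j = 2

namespace IsTwoOnesPerRow

variable [AddCommMonoidWithOne R]

theorem card_filter_eq_one [CharZero R] [DecidableEq R] {A : Matrix m n R}
    (hA : A.IsTwoOnesPerRow) (i : m) :
    (Finset.univ.filter fun j => A i j = 1).card = 2 := by
  have hboole : ∀ j, A i j = if A i j = 1 then 1 else 0 := fun j => by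
    rcases hA.1 i j with h | h <;> simp [h]
  have hsum := hA.2 i
  rw [Finset.sum_congr rfl fun j _ => hboole j, Finset.sum_boole] at hsum
  exact_mod_cast hsum

theorem submatrix {A : Matrix m n R} (hA : A.IsTwoOnesPerRow) (e : l → m) (f : o ≃ n) :
    (A.submatrix e f).IsTwoOnesPerRow :=
  ⟨fun i j => hA.1 (e i) (f j), fun i => (f.sum_comp (A (e i))).trans (hA.2 (e i))⟩

theorem fromBlocks {A : Matrix m n R} {B : Matrix m' n' R} (hA : A.IsTwoOnesPerRow)
    (hB : B.IsTwoOnesPerRow) : (fromBlocks A 0 0 B).IsTwoOnesPerRow := by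
  refine ⟨?_, ?_⟩
  · rintro (i | i) (j | j) <;> simp [hA.1, hB.1]
  · rintro (i | i) <;> simp [Fintype.sum_sum_type, hA.2, hB.2]

theorem blockDiagonal [DecidableEq o] {A : o → Matrix m n R}
    (hA : ∀ k, (A k).IsTwoOnesPerRow) : (blockDiagonal A).IsTwoOnesPerRow := by
  refine ⟨?_, ?_⟩
  · rintro ⟨i, k⟩ ⟨j, k'⟩
    rw [blockDiagonal_apply]
    split_ifs
    exacts [(hA k).1 i j, Or.inl rfl]
  · rintro ⟨i, k⟩
    simp [Fintype.sum_prod_type, blockDiagonal_apply, (hA k).2]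

end IsTwoOnesPerRow

section Gram

variable [CommRing R]

theorem det_fromBlocks_mul_transpose [Fintype m] [Fintype m'] [DecidableEq m] [DecidableEq m']
    (A : Matrix m n R) (B : Matrix m' n' R) :
    (fromBlocks A 0 0 B * (fromBlocks A 0 0 B)ᵀ).det = (A * Aᵀ).det * (B * Bᵀ).det := by
  simp [fromBlocks_transpose, fromBlocks_multiply, det_fromBlocks_zero₂₁]

theorem det_blockDiagonal_mul_transpose [Fintype m] [DecidableEq m] [DecidableEq o]
    (A : o → Matrix m n R) :
    (blockDiagonal A * (blockDiagonal A)ᵀ).det = ∏ k, (A k * (A k)ᵀ).det := by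
  rw [blockDiagonal_transpose, ← blockDiagonal_mul, det_blockDiagonal]

theorem det_submatrix_mul_transpose [Fintype m] [DecidableEq m] [Fintype l] [DecidableEq l]
    (A : Matrix m n R) (e : l ≃ m) (f : o ≃ n) :
    (A.submatrix e f * (A.submatrix e f)ᵀ).det = (A * Aᵀ).det := by
  rw [transpose_submatrix, submatrix_mul_equiv, det_submatrix_equiv_self]

theorem IsTwoOnesPerRow.exists_fin_det_mul_transpose_eq [Fintype m] [DecidableEq m]
    {A : Matrix m n R} (hA : A.IsTwoOnesPerRow) {p q : ℕ} (hp : Fintype.card m = p)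
    (hq : Fintype.card n = q) :
    ∃ I : Matrix (Fin p) (Fin q) R, I.IsTwoOnesPerRow ∧ (I * Iᵀ).det = (A * Aᵀ).det := by
  let e := (Fintype.equivFinOfCardEq hp).symm
  let f := (Fintype.equivFinOfCardEq hq).symm
  exact ⟨A.submatrix e f, hA.submatrix e f, det_submatrix_mul_transpose A e f⟩

end Gram

section Incidence

variable (R : Type*) [CommRing R]

def edgeIncidence : Matrix (Fin 1) (Fin 2) R := !![1, 1]

def triangleIncidence : Matrix (Fin 3) (Fin 3) R := !![1, 1, 0; 0, 1, 1; 1, 0, 1]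

theorem isTwoOnesPerRow_edgeIncidence : (edgeIncidence R).IsTwoOnesPerRow := by
  refine ⟨?_, ?_⟩
  · intro i j; fin_cases i; fin_cases j <;> simp [edgeIncidence]
  · intro i; fin_cases i; simp [edgeIncidence, one_add_one_eq_two]

theorem isTwoOnesPerRow_triangleIncidence : (triangleIncidence R).IsTwoOnesPerRow := by
  refine ⟨?_, ?_⟩
  · intro i j; fin_cases i <;> fin_cases j <;> simp [triangleIncidence]
  · intro i; fin_cases i <;> simp [triangleIncidence, Fin.sum_univ_three, one_add_one_eq_two]

theorem det_edgeIncidence_mul_transpose : (edgeIncidence R * (edgeIncidence R)ᵀ).det = 2 := by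
  rw [det_fin_one, mul_apply]
  simp [edgeIncidence, one_add_one_eq_two]

theorem det_triangleIncidence_mul_transpose :
    (triangleIncidence R * (triangleIncidence R)ᵀ).det = 4 := by
  simp [triangleIncidence, det_fin_three, vecMul, dotProduct, Fin.sum_univ_three]
  norm_num

theorem exists_isTwoOnesPerRow_det_mul_transpose_eq_two_pow {m n : ℕ} (t s z : ℕ)
    (hm : 3 * t + s = m) (hn : 3 * t + 2 * s + z = n) :
    ∃ I : Matrix (Fin m) (Fin n) R, I.IsTwoOnesPerRow ∧ (I * Iᵀ).det = 2 ^ (2 * t + s) := by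
  let A := fromBlocks
    (fromBlocks (blockDiagonal fun _ : Fin t => triangleIncidence R) 0 0
      (blockDiagonal fun _ : Fin s => edgeIncidence R)) 0 0 (0 : Matrix (Fin 0) (Fin z) R)
  have hA : A.IsTwoOnesPerRow :=
    ((IsTwoOnesPerRow.blockDiagonal fun _ => isTwoOnesPerRow_triangleIncidence R).fromBlocks
      (IsTwoOnesPerRow.blockDiagonal fun _ => isTwoOnesPerRow_edgeIncidence R)).fromBlocks
      ⟨finZeroElim, finZeroElim⟩
  obtain ⟨I, hI, hdet⟩ := hA.exists_fin_det_mul_transpose_eq (p := m) (q := n)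
    (by simp [← hm]) (by simp [← hn])
  refine ⟨I, hI, ?_⟩
  simp only [hdet, A]
  rw [det_fromBlocks_mul_transpose, det_fromBlocks_mul_transpose,
    det_blockDiagonal_mul_transpose, det_blockDiagonal_mul_transpose]
  simp only [det_triangleIncidence_mul_transpose, det_edgeIncidence_mul_transpose,
    Finset.prod_const, Finset.card_univ, Fintype.card_fin, det_isEmpty, mul_one]
  norm_num [pow_add, pow_mul]

end Incidence

end Matrix

theorem det_gram_two_ones_per_row_tight_general (m n : ℕ) :
    ((m : ℝ) ≤ (n : ℝ) / 2 →
      ∃ I : Matrix (Fin m) (Fin n) ℝ,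
        (∀ i j, I i j = 0 ∨ I i j = 1) ∧
        (∀ i, (Finset.univ.filter fun j => I i j = 1).card = 2) ∧
        (I * Iᵀ).det = 2 ^ m) ∧
    ((n : ℝ) / 2 ≤ (m : ℝ) → m ≤ n → 3 ∣ 2 * m - n →
      ∃ I : Matrix (Fin m) (Fin n) ℝ,
        (∀ i j, I i j = 0 ∨ I i j = 1) ∧
        (∀ i, (Finset.univ.filter fun j => I i j = 1).card = 2) ∧
        (I * Iᵀ).det = 2 ^ (((n : ℝ) + (m : ℝ)) / 3)) := by
  constructor
  · intro hmn
    have h2m : 2 * m ≤ n := by rify; linarith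
    obtain ⟨I, hI, hdet⟩ := exists_isTwoOnesPerRow_det_mul_transpose_eq_two_pow ℝ
      (m := m) (n := n) 0 m (n - 2 * m) (by omega) (by omega)
    exact ⟨I, hI.1, hI.card_filter_eq_one, by simpa using hdet⟩
  · rintro hnm hmn ⟨t, ht⟩
    have h2m : n ≤ 2 * m := by rify; linarith
    obtain ⟨I, hI, hdet⟩ := exists_isTwoOnesPerRow_det_mul_transpose_eq_two_pow ℝ
      (m := m) (n := n) t (n - m) 0 (by omega) (by omega)
    have hexp : ((n : ℝ) + m) / 3 = ((2 * t + (n - m) : ℕ) : ℝ) := by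
      rw [div_eq_iff three_ne_zero]
      exact_mod_cast (by omega : n + m = (2 * t + (n - m)) * 3)
    exact ⟨I, hI.1, hI.card_filter_eq_one, by rw [hdet, hexp, Real.rpow_natCast]⟩

/-- Tightness of the bound on the Gramian determinant for 0/1-matrices with exactly two
ones in each row: if `m ≤ n/2` there is such an `m × n` matrix with `det (I ⬝ Iᵀ) = 2^m`,
and if `n/2 ≤ m ≤ n` with `3 ∣ 2m - n` there is one with `det (I ⬝ Iᵀ) = 2^((n+m)/3)`. -/
theorem det_gram_two_ones_per_row_tight (m n : ℕ) (hm : 0 < m) (hn : 0 < n) :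
    ((m : ℝ) ≤ (n : ℝ) / 2 →
      ∃ I : Matrix (Fin m) (Fin n) ℝ,
        (∀ i j, I i j = 0 ∨ I i j = 1) ∧
        (∀ i, (Finset.univ.filter fun j => I i j = 1).card = 2) ∧
        (I * Iᵀ).det = 2 ^ m) ∧
    ((n : ℝ) / 2 ≤ (m : ℝ) → m ≤ n → 3 ∣ 2 * m - n →
      ∃ I : Matrix (Fin m) (Fin n) ℝ,
        (∀ i j, I i j = 0 ∨ I i j = 1) ∧
        (∀ i, (Finset.univ.filter fun j => I i j = 1).card = 2) ∧
        (I * Iᵀ).det = 2 ^ (((n : ℝ) + (m : ℝ)) / 3)) :=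
  det_gram_two_ones_per_row_tight_general m n
end

section
/- If A is an n×n matrix with all entries in {−1,0,1} having exactly t nonzero entries, then |det(A)| ≤ (t/n)^(n/2). -/
open scoped Classical

/-!
`(det A)² = det (Aᵀ A) ≤ (tr (Aᵀ A) / n) ^ n` by AM-GM on the (nonnegative) eigenvalues of the
positive semidefinite matrix `Aᵀ A`, and `tr (Aᵀ A) = ∑ A i j ^ 2` is the number `t` of nonzero
entries of a `{-1, 0, 1}`-matrix.
-/

open Finset Matrix

theorem Real.prod_le_arith_mean_pow {ι : Type*} (s : Finset ι) (z : ι → ℝ)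
    (hz : ∀ i ∈ s, 0 ≤ z i) : ∏ i ∈ s, z i ≤ ((∑ i ∈ s, z i) / #s) ^ #s := by
  rcases s.eq_empty_or_nonempty with rfl | hs
  · simp
  have hcard : (0 : ℝ) < #s := by exact_mod_cast hs.card_pos
  have amgm := Real.geom_mean_le_arith_mean s (fun _ ↦ 1) z (fun _ _ ↦ zero_le_one)
    (by simpa using hcard) hz
  simp only [Real.rpow_one, one_mul, sum_const, nsmul_eq_mul, mul_one] at amgm
  have hprod : 0 ≤ ∏ i ∈ s, z i := prod_nonneg hz
  calc ∏ i ∈ s, z i = ((∏ i ∈ s, z i) ^ (#s : ℝ)⁻¹) ^ #s := by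
        rw [← Real.rpow_natCast, ← Real.rpow_mul hprod, inv_mul_cancel₀ hcard.ne',
          Real.rpow_one]
    _ ≤ ((∑ i ∈ s, z i) / #s) ^ #s := pow_le_pow_left₀ (by positivity) amgm _

theorem Matrix.PosSemidef.det_le_trace_div_card_pow {n : Type*} [Fintype n] [DecidableEq n]
    {A : Matrix n n ℝ} (hA : A.PosSemidef) :
    A.det ≤ (A.trace / Fintype.card n) ^ Fintype.card n := by
  rw [hA.isHermitian.det_eq_prod_eigenvalues, hA.isHermitian.trace_eq_sum_eigenvalues]
  exact Real.prod_le_arith_mean_pow univ _ fun i _ ↦ hA.eigenvalues_nonneg i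

theorem Matrix.trace_transpose_mul_self {m n : Type*} [Fintype m] [Fintype n]
    (A : Matrix m n ℝ) : (Aᵀ * A).trace = ∑ i, ∑ j, A i j ^ 2 := by
  simp only [trace, diag_apply, mul_apply, transpose_apply, ← sq]
  exact sum_comm

theorem Matrix.abs_det_le_sum_sq_div_card_rpow {n : Type*} [Fintype n] [DecidableEq n]
    (A : Matrix n n ℝ) :
    |A.det| ≤ ((∑ i, ∑ j, A i j ^ 2) / Fintype.card n) ^ ((Fintype.card n : ℝ) / 2) := by
  have hGram : (Aᵀ * A).PosSemidef := by
    simpa [conjTranspose_eq_transpose_of_trivial] using posSemidef_conjTranspose_mul_self A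
  have hsq : A.det ^ 2 ≤ ((∑ i, ∑ j, A i j ^ 2) / Fintype.card n) ^ Fintype.card n := by
    simpa [det_mul, det_transpose, sq, trace_transpose_mul_self] using
      hGram.det_le_trace_div_card_pow
  have hmean : 0 ≤ (∑ i, ∑ j, A i j ^ 2) / Fintype.card n := by positivity
  calc |A.det| = √(A.det ^ 2) := (Real.sqrt_sq_eq_abs _).symm
    _ ≤ √(((∑ i, ∑ j, A i j ^ 2) / Fintype.card n) ^ Fintype.card n) := Real.sqrt_le_sqrt hsq
    _ = _ := by
      rw [Real.sqrt_eq_rpow, ← Real.rpow_natCast, ← Real.rpow_mul hmean]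
      ring_nf

theorem Finset.sum_sq_eq_card_ne_zero {ι : Type*} (s : Finset ι) (f : ι → ℝ)
    (hf : ∀ i ∈ s, f i = -1 ∨ f i = 0 ∨ f i = 1) :
    ∑ i ∈ s, f i ^ 2 = #{i ∈ s | f i ≠ 0} := by
  rw [← sum_boole]
  refine sum_congr rfl fun i hi ↦ ?_
  rcases hf i hi with h | h | h <;> simp [h]

/-- If `A` is an `n × n` matrix with entries in `{-1,0,1}` and exactly `t` nonzero
entries, then `|det A| ≤ (t/n)^(n/2)`. -/
theorem abs_det_le_of_t_nonzero (n t : ℕ) (A : Matrix (Fin n) (Fin n) ℝ)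
    (h : ∀ i j, A i j = -1 ∨ A i j = 0 ∨ A i j = 1)
    (ht : (Finset.univ.filter fun p : Fin n × Fin n => A p.1 p.2 ≠ 0).card = t) :
    |A.det| ≤ ((t : ℝ) / (n : ℝ)) ^ ((n : ℝ) / 2) := by
  have hsum : ∑ i, ∑ j, A i j ^ 2 = t := by
    rw [← ht, ← sum_product', univ_product_univ]
    exact sum_sq_eq_card_ne_zero univ (fun p : Fin n × Fin n ↦ A p.1 p.2) fun p _ ↦ h p.1 p.2
  simpa [hsum] using A.abs_det_le_sum_sq_div_card_rpow
end

section
/- Let n and t be positive integers such that k = t/n and n²/t are integers, and suppose there exists a Hadamard matrix of order k. Then there exists a matrix A ∈ {−1,0,1}^{n×n} with exactly t nonzero entries such that |det(A)| = (t/n)^(n/2). -/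
/-!
Put `n / k` copies of the Hadamard matrix `H` of order `k = t / n` on the diagonal. The result
is an `n × n` matrix with `k² · (n / k) = t` nonzero entries, all `±1`, and since
`H Hᵀ = k I` gives `|det H| = k^(k/2)`, its determinant has absolute value
`(k^(k/2))^(n/k) = k^(n/2)`. The hypothesis `t ∣ n²` is exactly what makes `k` divide `n`.
-/

open scoped Classical
open Matrix Finset

lemma Nat.div_dvd_of_dvd_of_dvd_sq {n t : ℕ} (h₁ : n ∣ t) (h₂ : t ∣ n ^ 2) : t / n ∣ n := by
  obtain ⟨k, rfl⟩ := h₁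
  rcases n.eq_zero_or_pos with rfl | hn
  · simp
  rw [Nat.mul_div_cancel_left k hn]
  exact Nat.dvd_of_mul_dvd_mul_left hn (by rwa [← sq])

namespace Matrix

variable {m n o R : Type*}

lemma blockDiagonal_apply_mem [Zero R] [DecidableEq o] {S : Set R} (h0 : 0 ∈ S)
    {M : o → Matrix m m R} (hM : ∀ k i j, M k i j ∈ S) (i j : m × o) :
    blockDiagonal M i j ∈ S := by
  rw [blockDiagonal_apply]
  split_ifs
  exacts [hM _ _ _, h0]

lemma card_filter_blockDiagonal_ne_zero [Fintype m] [Fintype o] [DecidableEq o] [Zero R]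
    (M : o → Matrix m m R) (hM : ∀ k i j, M k i j ≠ 0) :
    #{p : (m × o) × (m × o) | blockDiagonal M p.1 p.2 ≠ 0} =
      Fintype.card m * Fintype.card m * Fintype.card o := by
  simp only [blockDiagonal_apply, ne_eq, ite_eq_right_iff, hM, imp_false, not_not]
  rw [card_filter]
  simp only [Fintype.sum_prod_type, sum_ite_eq, mem_univ, if_true, sum_const, card_univ,
    smul_eq_mul, mul_one, Fintype.card_prod]
  ring

lemma card_filter_reindex_ne_zero [Fintype m] [Fintype n] [Zero R] (e : m ≃ n)
    (A : Matrix m m R) :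
    #{p : n × n | reindex e e A p.1 p.2 ≠ 0} = #{p : m × m | A p.1 p.2 ≠ 0} :=
  (card_equiv (e.prodCongr e) fun p => by simp only [mem_filter_univ]; simp).symm

lemma abs_det_eq_rpow_of_mul_transpose_eq_smul_one [Fintype m] [DecidableEq m]
    {H : Matrix m m ℝ} {c : ℝ} (hc : 0 ≤ c) (hH : H * Hᵀ = c • 1) :
    |H.det| = c ^ ((Fintype.card m : ℝ) / 2) := by
  have hsq : H.det ^ 2 = c ^ Fintype.card m := by
    simpa [sq] using congrArg det hH
  rw [← Real.sqrt_sq_eq_abs, hsq, Real.sqrt_eq_rpow, ← Real.rpow_natCast,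
    ← Real.rpow_mul hc, mul_one_div]

end Matrix

theorem abs_det_eq_of_hadamard_general (n t : ℕ)
    (hdvd₁ : n ∣ t) (hdvd₂ : t ∣ n ^ 2)
    (hH : ∃ H : Matrix (Fin (t / n)) (Fin (t / n)) ℝ,
      (∀ i j, H i j = 1 ∨ H i j = -1) ∧ H * Hᵀ = ((t / n : ℕ) : ℝ) • 1) :
    ∃ A : Matrix (Fin n) (Fin n) ℝ,
      (∀ i j, A i j = -1 ∨ A i j = 0 ∨ A i j = 1) ∧
      (Finset.univ.filter fun p : Fin n × Fin n => A p.1 p.2 ≠ 0).card = t ∧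
      |A.det| = ((t : ℝ) / (n : ℝ)) ^ ((n : ℝ) / 2) := by
  have hkm : t / n * (n / (t / n)) = n :=
    Nat.mul_div_cancel' (Nat.div_dvd_of_dvd_of_dvd_sq hdvd₁ hdvd₂)
  have hnk : n * (t / n) = t := Nat.mul_div_cancel' hdvd₁
  have hk : ((t / n : ℕ) : ℝ) = t / n := Nat.cast_div_charZero hdvd₁
  generalize n / (t / n) = m at hkm
  generalize t / n = k at hH hkm hnk hk
  obtain ⟨H, hH_sign, hH_orth⟩ := hH
  have hH_mem (a b) : H a b ∈ ({-1, 0, 1} : Set ℝ) := by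
    rcases hH_sign a b with h | h <;> simp [h]
  have hH_ne (a b) : H a b ≠ 0 := by
    rcases hH_sign a b with h | h <;> simp [h]
  let e : Fin k × Fin m ≃ Fin n := finProdFinEquiv.trans (finCongr hkm)
  refine ⟨reindex e e (blockDiagonal fun _ : Fin m => H), fun i j => ?_, ?_, ?_⟩
  · simpa using blockDiagonal_apply_mem (by simp) (fun _ => hH_mem) (e.symm i) (e.symm j)
  · rw [card_filter_reindex_ne_zero, card_filter_blockDiagonal_ne_zero _ fun _ => hH_ne]
    simp only [Fintype.card_fin, ← hnk, ← hkm]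
    ring
  · rw [det_reindex_self, det_blockDiagonal, prod_const, abs_pow,
      abs_det_eq_rpow_of_mul_transpose_eq_smul_one (Nat.cast_nonneg k) hH_orth,
      ← Real.rpow_natCast, ← Real.rpow_mul (Nat.cast_nonneg k), ← hk, ← hkm]
    simp only [card_univ, Fintype.card_fin]
    congr 1
    push_cast
    ring

/-- If `k = t/n` and `n²/t` are integers and a Hadamard matrix of order `k` exists, then
there is an `n × n` matrix with entries in `{-1,0,1}` having exactly `t` nonzero entries
and `|det A| = (t/n)^(n/2)`. -/
theorem abs_det_eq_of_hadamard (n t : ℕ) (hn : 0 < n) (ht : 0 < t)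
    (hdvd₁ : n ∣ t) (hdvd₂ : t ∣ n ^ 2)
    (hH : ∃ H : Matrix (Fin (t / n)) (Fin (t / n)) ℝ,
      (∀ i j, H i j = 1 ∨ H i j = -1) ∧ H * Hᵀ = ((t / n : ℕ) : ℝ) • 1) :
    ∃ A : Matrix (Fin n) (Fin n) ℝ,
      (∀ i j, A i j = -1 ∨ A i j = 0 ∨ A i j = 1) ∧
      (Finset.univ.filter fun p : Fin n × Fin n => A p.1 p.2 ≠ 0).card = t ∧
      |A.det| = ((t : ℝ) / (n : ℝ)) ^ ((n : ℝ) / 2) :=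
  abs_det_eq_of_hadamard_general n t hdvd₁ hdvd₂ hH
end

section
/- If A ∈ {0,1}^{n×n} has the k-consecutive ones property, then |det(A)| ≤ (2k)^(n/2). -/
open scoped Classical

/-- A 0/1-matrix `A` has the `k`-consecutive ones property if in every row the 1-entries
form at most `k` blocks of consecutive entries, i.e. for each row `i` the set
`{j : A i j = 1}` is a union of at most `k` intervals of consecutive indices. -/
def KConsecutiveOnes {n : ℕ} (A : Matrix (Fin n) (Fin n) ℝ) (k : ℕ) : Prop :=
  ∀ i : Fin n, ∃ s : Finset (ℕ × ℕ), s.card ≤ k ∧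
    ∀ j : Fin n, A i j = 1 ↔ ∃ p ∈ s, p.1 ≤ (j : ℕ) ∧ (j : ℕ) ≤ p.2

/-!
Subtracting from every column the next one (a zero column standing beyond the last) is right
multiplication by a unitriangular matrix, so it does not change the determinant. If `S` is the set
of ones of a row, the new row is `j ↦ 1_S(j) - 1_S(j + 1)`: it is nonzero exactly where the row
enters or leaves one of its at most `k` blocks, and each block is entered and left at most once.
So every row of the new matrix has at most `2k` entries `±1`, and Hadamard's inequality bounds
`|det A|` by `(√(2k))^n`.
-/

open Set

theorem Matrix.abs_det_le_prod_sqrt_sum_sq {n : ℕ} (M : Matrix (Fin n) (Fin n) ℝ) :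
    |M.det| ≤ ∏ i, √(∑ j, M i j ^ 2) := by
  have : Fact (Module.finrank ℝ (EuclideanSpace ℝ (Fin n)) = n) := ⟨finrank_euclideanSpace_fin⟩
  let b := EuclideanSpace.basisFun (Fin n) ℝ
  let v : Fin n → EuclideanSpace ℝ (Fin n) := fun i => WithLp.toLp 2 (M i)
  have hdet : b.toBasis.det v = M.det := by
    rw [Module.Basis.det_apply, ← Matrix.det_transpose]
    rfl
  have hnorm : ∀ i, ‖v i‖ = √(∑ j, M i j ^ 2) := by
    intro i
    simp [v, EuclideanSpace.norm_eq]
  calc |M.det| = |b.toBasis.orientation.volumeForm v| := by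
        rw [b.toBasis.orientation.volumeForm_robust' b, hdet]
    _ ≤ ∏ i, ‖v i‖ := b.toBasis.orientation.abs_volumeForm_apply_le v
    _ = ∏ i, √(∑ j, M i j ^ 2) := by simp only [hnorm]

theorem Matrix.abs_det_le_rpow_of_sum_sq_le {n : ℕ} {M : Matrix (Fin n) (Fin n) ℝ} {c : ℝ}
    (hc : 0 ≤ c) (hM : ∀ i, ∑ j, M i j ^ 2 ≤ c) : |M.det| ≤ c ^ ((n : ℝ) / 2) := by
  calc |M.det| ≤ ∏ i, √(∑ j, M i j ^ 2) := M.abs_det_le_prod_sqrt_sum_sq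
    _ ≤ ∏ _i : Fin n, √c := by gcongr with i; exact hM i
    _ = c ^ ((n : ℝ) / 2) := by
      rw [Finset.prod_const, Finset.card_univ, Fintype.card_fin, Real.sqrt_eq_rpow,
        ← Real.rpow_mul_natCast hc]
      ring_nf

def jumpSet (S : Set ℕ) : Set ℕ := {m | Xor (m ∈ S) (m + 1 ∈ S)}

theorem encard_jumpSet_le_two {I : Set ℕ} (hI : I.OrdConnected) : (jumpSet I).encard ≤ 2 := by
  have hexit : {m | m ∈ I ∧ m + 1 ∉ I}.encard ≤ 1 := by
    refine encard_le_one_iff.2 fun a b ha hb => ?_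
    by_contra hne
    rcases Nat.lt_or_gt_of_ne hne with h | h
    · exact ha.2 (hI.out ha.1 hb.1 ⟨by omega, h⟩)
    · exact hb.2 (hI.out hb.1 ha.1 ⟨by omega, h⟩)
  have hentry : {m | m + 1 ∈ I ∧ m ∉ I}.encard ≤ 1 := by
    refine encard_le_one_iff.2 fun a b ha hb => ?_
    by_contra hne
    rcases Nat.lt_or_gt_of_ne hne with h | h
    · exact hb.2 (hI.out ha.1 hb.1 ⟨h, by omega⟩)
    · exact ha.2 (hI.out hb.1 ha.1 ⟨h, by omega⟩)
  calc (jumpSet I).encard = ({m | m ∈ I ∧ m + 1 ∉ I} ∪ {m | m + 1 ∈ I ∧ m ∉ I}).encard := rfl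
    _ ≤ 1 + 1 := (encard_union_le _ _).trans (add_le_add hexit hentry)
    _ = 2 := one_add_one_eq_two

theorem sq_indicator_sub_indicator_succ (S : Set ℕ) (m : ℕ) :
    (S.indicator 1 m - S.indicator 1 (m + 1) : ℝ) ^ 2 = (jumpSet S).indicator 1 m := by
  by_cases hm : m ∈ S <;> by_cases hm1 : m + 1 ∈ S <;> simp [jumpSet, Xor, hm, hm1]

theorem jumpSet_biUnion_subset {ι : Type*} (s : Finset ι) (I : ι → Set ℕ) :
    jumpSet (⋃ i ∈ s, I i) ⊆ ⋃ i ∈ s, jumpSet (I i) := by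
  intro m hm
  simp only [jumpSet, mem_iUnion, mem_ofPred_eq, Xor] at hm ⊢
  rcases hm with ⟨⟨i, hi, hmi⟩, hm1⟩ | ⟨⟨i, hi, hmi⟩, hm⟩
  · exact ⟨i, hi, Or.inl ⟨hmi, fun h => hm1 ⟨i, hi, h⟩⟩⟩
  · exact ⟨i, hi, Or.inr ⟨hmi, fun h => hm ⟨i, hi, h⟩⟩⟩

theorem encard_jumpSet_biUnion_le {ι : Type*} (s : Finset ι) {I : ι → Set ℕ}
    (hI : ∀ i ∈ s, (I i).OrdConnected) : (jumpSet (⋃ i ∈ s, I i)).encard ≤ 2 * s.card :=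
  calc (jumpSet (⋃ i ∈ s, I i)).encard ≤ (⋃ i ∈ s, jumpSet (I i)).encard :=
        encard_le_encard (jumpSet_biUnion_subset s I)
    _ ≤ ∑ i ∈ s, (jumpSet (I i)).encard := s.set_encard_biUnion_le _
    _ ≤ ∑ _i ∈ s, 2 := Finset.sum_le_sum fun i hi => encard_jumpSet_le_two (hI i hi)
    _ = 2 * s.card := by rw [Finset.sum_const, nsmul_eq_mul, mul_comm]

namespace Matrix

section Shift

variable {ι R : Type*} {n : ℕ}

def rowExt [Zero R] (A : Matrix ι (Fin n) R) (i : ι) (m : ℕ) : R :=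
  if h : m < n then A i ⟨m, h⟩ else 0

@[simp]
theorem rowExt_coe [Zero R] (A : Matrix ι (Fin n) R) (i : ι) (j : Fin n) :
    A.rowExt i j = A i j := by
  simp [rowExt]

def colDiff [Zero R] [Sub R] (A : Matrix ι (Fin n) R) : Matrix ι (Fin n) R :=
  of fun i j => A.rowExt i j - A.rowExt i (j + 1)

def subdiagonal (R : Type*) [Zero R] [One R] (n : ℕ) : Matrix (Fin n) (Fin n) R :=
  of fun l j => if (l : ℕ) = j + 1 then 1 else 0

variable [CommRing R]

theorem mul_subdiagonal_apply (A : Matrix ι (Fin n) R) (i : ι) (j : Fin n) :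
    (A * subdiagonal R n) i j = A.rowExt i (j + 1) := by
  rw [mul_apply]
  simp only [subdiagonal, of_apply, mul_ite, mul_one, mul_zero, ← rowExt_coe A i]
  rw [Fin.sum_univ_eq_sum_range (fun m => if m = j + 1 then A.rowExt i m else 0),
    Finset.sum_ite_eq']
  split_ifs with h
  · rfl
  · simp_all [rowExt]

theorem colDiff_eq_mul (A : Matrix ι (Fin n) R) : A.colDiff = A * (1 - subdiagonal R n) := by
  ext i j
  rw [Matrix.mul_sub, Matrix.mul_one, sub_apply, mul_subdiagonal_apply]
  simp [colDiff]

theorem det_one_sub_subdiagonal : (1 - subdiagonal R n : Matrix (Fin n) (Fin n) R).det = 1 := by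
  have hlower : (1 - subdiagonal R n : Matrix (Fin n) (Fin n) R).IsLowerTriangular := by
    intro l j (h : l < j)
    simp [subdiagonal, h.ne, show (l : ℕ) ≠ j + 1 by omega]
  rw [det_of_isLowerTriangular _ hlower]
  exact Finset.prod_eq_one fun l _ => by simp [subdiagonal]

@[simp]
theorem det_colDiff (A : Matrix (Fin n) (Fin n) R) : A.colDiff.det = A.det := by
  rw [colDiff_eq_mul, det_mul, det_one_sub_subdiagonal, mul_one]

end Shift

theorem sum_sq_colDiff_le {ι : Type*} {n : ℕ} {A : Matrix ι (Fin n) ℝ} {i : ι} {S : Set ℕ}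
    (hS : A.rowExt i = S.indicator 1) {c : ℕ} (hc : (jumpSet S).encard ≤ c) :
    ∑ j, A.colDiff i j ^ 2 ≤ c := by
  have hcard : ((Finset.range n).filter (· ∈ jumpSet S)).card ≤ c := by
    have := (encard_le_encard (s := ↑((Finset.range n).filter (· ∈ jumpSet S)))
      (by intro m; simp)).trans hc
    exact_mod_cast this
  calc ∑ j, A.colDiff i j ^ 2
      = ∑ m ∈ Finset.range n, (S.indicator 1 m - S.indicator 1 (m + 1) : ℝ) ^ 2 := by
        rw [← Fin.sum_univ_eq_sum_range
          (fun m => (S.indicator 1 m - S.indicator 1 (m + 1) : ℝ) ^ 2)]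
        simp only [colDiff, of_apply, hS]
    _ = ((Finset.range n).filter (· ∈ jumpSet S)).card := by
        rw [Finset.sum_congr rfl fun m _ => sq_indicator_sub_indicator_succ S m]
        simp [indicator_apply]
    _ ≤ c := by exact_mod_cast hcard

end Matrix

theorem KConsecutiveOnes.exists_rowExt_eq_indicator {n k : ℕ} {A : Matrix (Fin n) (Fin n) ℝ}
    (h01 : ∀ i j, A i j = 0 ∨ A i j = 1) (hk : KConsecutiveOnes A k) (i : Fin n) :
    ∃ s : Finset (ℕ × ℕ), s.card ≤ k ∧
      A.rowExt i = (⋃ p ∈ s, Icc p.1 p.2 ∩ Iio n).indicator 1 := by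
  obtain ⟨s, hs, hones⟩ := hk i
  refine ⟨s, hs, funext fun m => ?_⟩
  by_cases hm : m < n
  · have hmem : m ∈ ⋃ p ∈ s, Icc p.1 p.2 ∩ Iio n ↔ A i ⟨m, hm⟩ = 1 := by
      simp only [hones, mem_iUnion₂, mem_inter_iff, mem_Icc, mem_Iio, hm, and_true, exists_prop]
    simp only [Matrix.rowExt, dif_pos hm, indicator_apply, hmem, Pi.one_apply]
    rcases h01 i ⟨m, hm⟩ with h | h <;> simp [h]
  · simp [Matrix.rowExt, hm]

/-- If `A ∈ {0,1}^{n×n}` has the `k`-consecutive ones property, then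
`|det A| ≤ (2k)^(n/2)`. -/
theorem abs_det_le_of_kConsecutiveOnes (n k : ℕ) (A : Matrix (Fin n) (Fin n) ℝ)
    (h01 : ∀ i j, A i j = 0 ∨ A i j = 1) (hk : KConsecutiveOnes A k) :
    |A.det| ≤ (2 * (k : ℝ)) ^ ((n : ℝ) / 2) := by
  have hrows : ∀ i, ∑ j, A.colDiff i j ^ 2 ≤ 2 * (k : ℝ) := by
    intro i
    obtain ⟨s, hs, hrow⟩ := hk.exists_rowExt_eq_indicator h01 i
    have hjumps : (jumpSet (⋃ p ∈ s, Icc p.1 p.2 ∩ Iio n)).encard ≤ (2 * k : ℕ) :=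
      (encard_jumpSet_biUnion_le s fun _ _ => inferInstance).trans (by push_cast; gcongr)
    exact_mod_cast Matrix.sum_sq_colDiff_le hrow hjumps
  rw [← A.det_colDiff]
  exact Matrix.abs_det_le_rpow_of_sum_sq_le (by positivity) hrows
end

section
/- Let k be a positive integer such that a Hadamard matrix of order k exists, and let n be a positive integer divisible by k. Then there exists a matrix A ∈ {0,1}^{n×n} with the k-consecutive ones property such that |det(A)| = k^((n−k)/2). -/
/-!
Write `n = k (m + 1)` and index rows and columns by pairs `(t, b) ∈ Fin k × Fin (m + 1)`, so that
the groups `t` are consecutive runs of `m + 1` columns. Row `(s, 0)` is the indicator of group `s`;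
for `b > 0`, row `(s, b)` meets group `t` in the single position `b - 1` if `H s t = 1` and in the
positions `b, …, m` otherwise. Every row thus meets every group in one interval, so it has at most
`k` blocks of ones.

Subtracting from each column its left neighbour in the same group (a unimodular column operation)
replaces the indicator of an interval `[a, c]` by `δ_a - δ_(c+1)`. The resulting matrix is block
lower triangular in the position `b`, with diagonal blocks `I, -H, …, -H`, so
`|det A| = |det H| ^ m = k ^ (k m / 2) = k ^ ((n - k) / 2)`.
-/

open scoped Classical
open Matrix

open Finset

theorem Matrix.BlockTriangular.det_eq_prod_snd {R α β : Type*} [CommRing R] [Fintype α]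
    [DecidableEq α] [Fintype β] [LinearOrder β] {M : Matrix (α × β) (α × β) R}
    (hM : M.BlockTriangular Prod.snd) :
    M.det = ∏ c, (of fun s t => M (s, c) (t, c)).det := by
  rw [hM.det_fintype]
  refine prod_congr rfl fun c _ => ?_
  let e : α ≃ {x : α × β // x.2 = c} :=
    { toFun := fun s => ⟨(s, c), rfl⟩
      invFun := fun x => x.1.1
      left_inv := fun _ => rfl
      right_inv := by rintro ⟨⟨s, _⟩, rfl⟩; rfl }
  rw [← det_submatrix_equiv_self e]
  rfl

section IntervalMatrix

variable {ρ α : Type*} (l : ℕ)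

def intervalMatrix (I : ρ → α → ℕ × ℕ) : Matrix ρ (α × Fin l) ℝ :=
  fun x y => if (I x y.1).1 ≤ y.2 ∧ (y.2 : ℕ) ≤ (I x y.1).2 then 1 else 0

def intervalBoundaryMatrix (I : ρ → α → ℕ × ℕ) : Matrix ρ (α × Fin l) ℝ :=
  fun x y => (if (y.2 : ℕ) = (I x y.1).1 then 1 else 0) -
    (if (y.2 : ℕ) = (I x y.1).2 + 1 then 1 else 0)

variable (α) in
def blockUpperOnes [DecidableEq α] : Matrix (α × Fin l) (α × Fin l) ℝ :=
  fun z y => if z.1 = y.1 ∧ z.2 ≤ y.2 then 1 else 0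

theorem det_blockUpperOnes [Fintype α] [DecidableEq α] : (blockUpperOnes α l).det = 1 := by
  have hU : (blockUpperOnes α l).BlockTriangular Prod.snd := fun z y h => by
    simp [blockUpperOnes, not_le.mpr h]
  rw [hU.det_eq_prod_snd]
  refine prod_eq_one fun c _ => ?_
  have hc : (of fun s t => blockUpperOnes α l (s, c) (t, c)) = 1 := by
    ext s t
    simp [blockUpperOnes, one_apply]
  rw [hc, det_one]

variable {l}

theorem mul_blockUpperOnes_apply [Fintype α] [DecidableEq α] (M : Matrix ρ (α × Fin l) ℝ)
    (x : ρ) (y : α × Fin l) :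
    (M * blockUpperOnes α l) x y = ∑ d ∈ Iic y.2, M x (y.1, d) := by
  rw [mul_apply, Fintype.sum_prod_type,
    sum_eq_single y.1 (fun t _ ht => by simp [blockUpperOnes, ht]) (by simp)]
  simp [blockUpperOnes, ← sum_filter, filter_ge_eq_Iic]

theorem sum_Iic_ite_val_eq (c : Fin l) (p : ℕ) :
    ∑ d ∈ Iic c, (if (d : ℕ) = p then (1 : ℝ) else 0) = if p ≤ c then 1 else 0 := by
  split_ifs with hp
  · have hpl : p < l := hp.trans_lt c.isLt
    have hd : ∀ d : Fin l, (d : ℕ) = p ↔ d = ⟨p, hpl⟩ := fun d => by rw [Fin.ext_iff]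
    simp_rw [hd, sum_ite_eq', mem_Iic, Fin.le_def, if_pos hp]
  · refine sum_eq_zero fun d hd => if_neg ?_
    rintro rfl
    exact hp (Fin.le_def.mp (mem_Iic.mp hd))

theorem intervalMatrix_eq_mul [Fintype α] [DecidableEq α] (I : ρ → α → ℕ × ℕ)
    (hI : ∀ x t, (I x t).1 ≤ (I x t).2 + 1) :
    intervalMatrix l I = intervalBoundaryMatrix l I * blockUpperOnes α l := by
  ext x ⟨t, c⟩
  simp only [mul_blockUpperOnes_apply, intervalBoundaryMatrix, sum_sub_distrib,
    sum_Iic_ite_val_eq, intervalMatrix]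
  have := hI x t
  split_ifs <;> norm_num <;> omega

end IntervalMatrix

theorem kConsecutiveOnes_intervalMatrix {k m : ℕ} (I : Fin k × Fin (m + 1) → Fin k → ℕ × ℕ)
    (hI : ∀ x t, (I x t).2 ≤ m) :
    KConsecutiveOnes ((intervalMatrix (m + 1) I).submatrix finProdFinEquiv.symm
      finProdFinEquiv.symm) k := by
  intro i
  obtain ⟨x, rfl⟩ := finProdFinEquiv.surjective i
  refine ⟨univ.image fun t => ((I x t).1 + (m + 1) * t, (I x t).2 + (m + 1) * t),
    card_image_le.trans (by simp), fun j => ?_⟩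
  obtain ⟨y, rfl⟩ := finProdFinEquiv.surjective j
  have hy := y.2.isLt
  simp only [submatrix_apply, Equiv.symm_apply_apply, finProdFinEquiv_apply_val, intervalMatrix,
    ite_eq_left_iff, zero_ne_one, imp_false, not_not, mem_image, mem_univ, true_and,
    exists_exists_eq_and]
  constructor
  · rintro ⟨hlo, hhi⟩
    exact ⟨y.1, by omega, by omega⟩
  · rintro ⟨t, hlo, hhi⟩
    -- both are the quotient of the column index by `m + 1`
    have hyt : y.1 = t := by
      have := hI x t
      exact Fin.ext (by nlinarith)
    subst hyt
    omega

section Hadamard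

variable {k : ℕ} (m : ℕ) (H : Matrix (Fin k) (Fin k) ℝ)

noncomputable def hadamardInterval (x : Fin k × Fin (m + 1)) (t : Fin k) : ℕ × ℕ :=
  -- `(1, 0)` is the empty interval
  if (x.2 : ℕ) = 0 then (if x.1 = t then (0, m) else (1, 0))
  else if H x.1 t = 1 then (x.2 - 1, x.2 - 1) else (x.2, m)

theorem hadamardInterval_snd_le (x : Fin k × Fin (m + 1)) (t : Fin k) :
    (hadamardInterval m H x t).2 ≤ m := by
  unfold hadamardInterval; split_ifs <;> simp

theorem hadamardInterval_fst_le (x : Fin k × Fin (m + 1)) (t : Fin k) :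
    (hadamardInterval m H x t).1 ≤ (hadamardInterval m H x t).2 + 1 := by
  unfold hadamardInterval; split_ifs <;> simp

theorem det_intervalBoundaryMatrix_hadamardInterval (hH : ∀ i j, H i j = 1 ∨ H i j = -1) :
    (intervalBoundaryMatrix (m + 1) (hadamardInterval m H)).det = (-H).det ^ m := by
  set L := intervalBoundaryMatrix (m + 1) (hadamardInterval m H)
  have hL : Lᵀ.BlockTriangular Prod.snd := fun x y h => by
    have hyx : (y.2 : ℕ) < x.2 := h
    simp only [transpose_apply, L, intervalBoundaryMatrix, hadamardInterval]
    split_ifs <;> first | omega | norm_num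
  have h0 : (of fun s t => Lᵀ (s, 0) (t, 0)) = 1 := by
    ext s t
    by_cases hst : t = s <;>
      simp [L, intervalBoundaryMatrix, hadamardInterval, one_apply, hst, eq_comm (a := s)]
  have hsucc (b : Fin m) : (of fun s t => Lᵀ (s, b.succ) (t, b.succ)) = (-H)ᵀ := by
    ext s t
    rcases hH t s with h | h <;>
      norm_num [L, intervalBoundaryMatrix, hadamardInterval, h, b.isLt.ne]
  simp_rw [← det_transpose L, hL.det_eq_prod_snd, Fin.prod_univ_succ, h0, hsucc, det_one,
    det_transpose, prod_const, card_univ, Fintype.card_fin, one_mul]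

end Hadamard

theorem abs_det_of_mul_transpose_eq_smul_one {ι : Type*} [Fintype ι] [DecidableEq ι]
    {H : Matrix ι ι ℝ} {c : ℝ} (hc : 0 ≤ c) (hH : H * Hᵀ = c • 1) :
    |H.det| = c ^ ((Fintype.card ι : ℝ) / 2) := by
  have hsq : H.det ^ 2 = c ^ Fintype.card ι := by
    simpa [sq] using congrArg det hH
  rw [← Real.sqrt_sq_eq_abs, hsq, Real.sqrt_eq_rpow, ← Real.rpow_natCast, ← Real.rpow_mul hc]
  ring_nf

theorem exists_kConsecutiveOnes_det_eq_general (k n : ℕ) (hn : 0 < n)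
    (hdvd : k ∣ n)
    (hH : ∃ H : Matrix (Fin k) (Fin k) ℝ,
      (∀ i j, H i j = 1 ∨ H i j = -1) ∧ H * Hᵀ = (k : ℝ) • 1) :
    ∃ A : Matrix (Fin n) (Fin n) ℝ,
      (∀ i j, A i j = 0 ∨ A i j = 1) ∧ KConsecutiveOnes A k ∧
      |A.det| = (k : ℝ) ^ (((n : ℝ) - (k : ℝ)) / 2) := by
  obtain ⟨H, hpm, hHad⟩ := hH
  obtain ⟨q, rfl⟩ := hdvd
  obtain ⟨m, rfl⟩ := Nat.exists_eq_add_one.mpr (Nat.pos_of_mul_pos_left hn)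
  let e := (finProdFinEquiv (m := k) (n := m + 1)).symm
  refine ⟨(intervalMatrix (m + 1) (hadamardInterval m H)).submatrix e e,
    fun i j => (ite_eq_or_eq _ _ _).symm,
    kConsecutiveOnes_intervalMatrix _ (hadamardInterval_snd_le m H), ?_⟩
  calc _ = |(-H).det| ^ m := by
        rw [det_submatrix_equiv_self, intervalMatrix_eq_mul _ (hadamardInterval_fst_le m H),
          det_mul, det_blockUpperOnes, mul_one,
          det_intervalBoundaryMatrix_hadamardInterval m H hpm, abs_pow]
    _ = |H.det| ^ m := by simp [det_neg, abs_mul]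
    _ = (k : ℝ) ^ (((k * (m + 1) : ℕ) - k : ℝ) / 2) := by
        rw [abs_det_of_mul_transpose_eq_smul_one k.cast_nonneg hHad, Fintype.card_fin,
          ← Real.rpow_natCast, ← Real.rpow_mul k.cast_nonneg]
        push_cast
        ring_nf

/-- If a Hadamard matrix of order `k` exists and `k ∣ n`, then there is an `n × n`
0/1-matrix with the `k`-consecutive ones property whose determinant has absolute value
`k^((n-k)/2)`. -/
theorem exists_kConsecutiveOnes_det_eq (k n : ℕ) (hk : 0 < k) (hn : 0 < n)
    (hdvd : k ∣ n)
    (hH : ∃ H : Matrix (Fin k) (Fin k) ℝ,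
      (∀ i j, H i j = 1 ∨ H i j = -1) ∧ H * Hᵀ = (k : ℝ) • 1) :
    ∃ A : Matrix (Fin n) (Fin n) ℝ,
      (∀ i j, A i j = 0 ∨ A i j = 1) ∧ KConsecutiveOnes A k ∧
      |A.det| = (k : ℝ) ^ (((n : ℝ) - (k : ℝ)) / 2) :=
  exists_kConsecutiveOnes_det_eq_general k n hn hdvd hH
end

section
/- If T is a tree on n vertices and 𝒫 is a set of n−1 paths in T, then the (n−1)×(n−1) path-edge incidence matrix A(𝒫,T) satisfies |det(A(𝒫,T))| ≤ 2^(n−1). -/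
/-!
Root the tree at `r` and let `D v` be the edge set of the path from `r` to `v`. A path from `a`
to `b` has edge set `D a ∆ D b = (D a \ D b) ∪ (D b \ D a)`, so by multilinearity in the rows
`det A` is a sum of `2^(n-1)` determinants of `0/1` matrices whose rows are indicators of sets
`D a \ D b`. The subtrees below the edges form a laminar family; ordering edges by reverse
inclusion of their subtrees, every `D a \ D b` is a convex chain and every `Set.Iic e` is a
chain. A square matrix whose rows are indicators of convex chains in such an order has
`|det| ≤ 1`: rows through a maximal element `e` are nested, so subtracting the shortest one from
the others leaves a single `1` in column `e`, and expanding along it gives a smaller matrix of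
the same kind.
-/

open scoped Classical symmDiff
open Matrix

section ConvexChain

variable {ι : Type*} [Preorder ι] {s t : Set ι} {e : ι}

def IsConvexChain (s : Set ι) : Prop := IsChain (· ≤ ·) s ∧ s.OrdConnected

lemma IsChain.subset_Iic_of_isMax (hs : IsChain (· ≤ ·) s) (he : IsMax e) (hes : e ∈ s) :
    s ⊆ Set.Iic e := by
  intro x hx
  rcases eq_or_ne x e with rfl | hne
  · exact le_rfl
  · exact (hs hx hes hne).elim id (@he x)

lemma IsConvexChain.subset_or_subset_of_isMax (hι : ∀ e : ι, IsChain (· ≤ ·) (Set.Iic e))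
    (hs : IsConvexChain s) (ht : IsConvexChain t) (he : IsMax e) (hes : e ∈ s) (het : e ∈ t) :
    s ⊆ t ∨ t ⊆ s := by
  by_contra! h
  obtain ⟨x, hxs, hxt⟩ := Set.not_subset.mp h.1
  obtain ⟨y, hyt, hys⟩ := Set.not_subset.mp h.2
  have hx := hs.1.subset_Iic_of_isMax he hes hxs
  have hy := ht.1.subset_Iic_of_isMax he het hyt
  rcases eq_or_ne x y with rfl | hne
  · exact hxt hyt
  rcases hι e hx hy hne with hxy | hyx
  · exact hys (hs.2.out hxs hes ⟨hxy, hy⟩)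
  · exact hxt (ht.2.out hyt het ⟨hyx, hx⟩)

lemma IsConvexChain.diff (hs : IsConvexChain s) (ht : t.OrdConnected) (he : IsMax e)
    (hes : e ∈ s) (het : e ∈ t) : IsConvexChain (s \ t) := by
  refine ⟨hs.1.mono Set.sdiff_subset, ⟨fun x hx z hz y hy => ⟨hs.2.out hx.1 hz.1 hy, ?_⟩⟩⟩
  exact fun hyt => hz.2 (ht.out hyt het ⟨hy.2, hs.1.subset_Iic_of_isMax he hes hz.1⟩)

lemma IsConvexChain.preimage_val {p : ι → Prop} (hs : IsConvexChain s) :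
    IsConvexChain ((↑) ⁻¹' s : Set {x // p x}) :=
  ⟨hs.1.preimage _ _ _ Subtype.val_injective fun _ _ => id, hs.2.preimage_mono (Subtype.mono_coe p)⟩

end ConvexChain

section Incidence

variable {ι κ : Type*} (R : Type*)

noncomputable def incidenceMatrix [Zero R] [One R] (s : ι → Set κ) : Matrix ι κ R :=
  of fun i j => if j ∈ s i then 1 else 0

@[simp] lemma incidenceMatrix_apply [Zero R] [One R] (s : ι → Set κ) (i : ι) (j : κ) :
    incidenceMatrix R s i j = if j ∈ s i then 1 else 0 := rfl

lemma incidenceMatrix_union [AddZeroClass R] [One R] (s t : ι → Set κ)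
    (hst : ∀ i, Disjoint (s i) (t i)) :
    incidenceMatrix R (fun i => s i ∪ t i) = incidenceMatrix R s + incidenceMatrix R t := by
  ext i j
  by_cases hj : j ∈ s i
  · simp [hj, Set.disjoint_left.mp (hst i) hj]
  · simp [hj]

lemma incidenceMatrix_piecewise [Zero R] [One R] [DecidableEq ι] (S : Finset ι)
    (s t : ι → Set κ) :
    S.piecewise (incidenceMatrix R s) (incidenceMatrix R t) =
      incidenceMatrix R (S.piecewise s t) := by
  ext i j
  by_cases hi : i ∈ S <;> simp [Finset.piecewise, hi]

variable {R} [CommRing R] [Fintype ι] [DecidableEq ι]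

lemma det_incidenceMatrix_diff (s : ι → Set ι) (i₀ : ι) (p : ι → Prop) [DecidablePred p]
    (hp : ¬p i₀) (hsub : ∀ i, p i → s i₀ ⊆ s i) :
    (incidenceMatrix R fun i => if p i then s i \ s i₀ else s i).det =
      (incidenceMatrix R s).det := by
  symm
  refine det_eq_of_forall_row_eq_smul_add_const (fun i => if p i then 1 else 0) i₀
    (by simp [hp]) fun i j => ?_
  by_cases hi : p i
  · by_cases hj : j ∈ s i₀
    · simp [hi, hp, hj, hsub i hi hj]
    · simp [hi, hp, hj]
  · simp [hi]

lemma det_incidenceMatrix_of_mem_iff (s : ι → Set ι) (e : ι) (he : ∀ i, e ∈ s i ↔ i = e) :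
    (incidenceMatrix R s).det = (incidenceMatrix R fun i : {x // x ≠ e} => (↑) ⁻¹' s i).det := by
  have : Subsingleton {x // ¬x ≠ e} := ⟨fun x y => Subtype.ext (by grind)⟩
  rw [twoBlockTriangular_det' _ (· ≠ e) fun i hi j hj => by simp [not_not.mp hj, he, hi],
    det_eq_elem_of_subsingleton (toSquareBlockProp (incidenceMatrix R s) fun i => ¬i ≠ e)
      ⟨e, not_not.mpr rfl⟩]
  simp [toSquareBlockProp, toBlock, he]
  rfl

variable [LinearOrder R] [IsStrictOrderedRing R]

lemma abs_det_incidenceMatrix_comp_perm (s : ι → Set ι) (σ : Equiv.Perm ι) :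
    |(incidenceMatrix R (s ∘ σ)).det| = |(incidenceMatrix R s).det| := by
  rw [show incidenceMatrix R (s ∘ σ) = (incidenceMatrix R s).submatrix σ id from rfl,
    det_permute, abs_mul]
  simp [← Int.cast_abs]

variable [Preorder ι] {s : ι → Set ι} {e : ι}

lemma exists_abs_det_incidenceMatrix_eq_of_isMax (hι : ∀ e : ι, IsChain (· ≤ ·) (Set.Iic e))
    (hs : ∀ i, IsConvexChain (s i)) (he : IsMax e) (hcol : ∃ i, e ∈ s i) :
    ∃ t : ι → Set ι, (∀ i, IsConvexChain (t i)) ∧ (∀ i, e ∈ t i ↔ i = e) ∧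
      |(incidenceMatrix R s).det| = |(incidenceMatrix R t).det| := by
  obtain ⟨i₀, hi₀, hmin⟩ := Finset.exists_min_image (Finset.univ.filter (e ∈ s ·))
    (fun i => (s i).ncard) (hcol.imp fun i hi => by simpa using hi)
  replace hi₀ : e ∈ s i₀ := by simpa using hi₀
  have hsub (i : ι) (hi : e ∈ s i) : s i₀ ⊆ s i :=
    ((hs i₀).subset_or_subset_of_isMax hι (hs i) he hi₀ hi).elim id fun h =>
      (Set.eq_of_subset_of_ncard_le h (hmin i (by simpa using hi)) (Set.toFinite _)).ge
  set s' := fun i => if e ∈ s i ∧ i ≠ i₀ then s i \ s i₀ else s i with hs'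
  have hs'e (i : ι) : e ∈ s' i ↔ i = i₀ := by
    by_cases hi : i = i₀ <;> by_cases hei : e ∈ s i <;> simp [hs', hi, hei, hi₀]
  refine ⟨s' ∘ Equiv.swap i₀ e, fun i => ?_, fun i => ?_, ?_⟩
  · by_cases hi : e ∈ s (Equiv.swap i₀ e i) ∧ Equiv.swap i₀ e i ≠ i₀
    · simpa [hs', hi] using (hs _).diff (hs i₀).2 he hi.1 hi₀
    · simpa [hs', hi] using hs _
  · simp [hs'e, Equiv.swap_apply_eq_iff]
  · rw [abs_det_incidenceMatrix_comp_perm, det_incidenceMatrix_diff s i₀ _ (by simp)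
      fun i hi => hsub i hi.1]

theorem abs_det_incidenceMatrix_le_one (hι : ∀ e : ι, IsChain (· ≤ ·) (Set.Iic e))
    (hs : ∀ i, IsConvexChain (s i)) : |(incidenceMatrix R s).det| ≤ 1 := by
  induction hn : Fintype.card ι generalizing ι with
  | zero =>
    have := Fintype.card_eq_zero_iff.mp hn
    simp
  | succ n ih =>
    have : Nonempty ι := Fintype.card_pos_iff.mp (by omega)
    obtain ⟨e, -, he⟩ := Finset.exists_maximal (Finset.univ_nonempty (α := ι))
    replace he : IsMax e := fun b h => he (Finset.mem_univ b) h
    by_cases hcol : ∃ i, e ∈ s i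
    · obtain ⟨t, ht, hte, hdet⟩ := exists_abs_det_incidenceMatrix_eq_of_isMax (R := R) hι hs he hcol
      rw [hdet, det_incidenceMatrix_of_mem_iff t e hte]
      refine ih (fun x => (hι x).preimage _ _ _ Subtype.val_injective fun _ _ => id)
        (fun i => (ht i).preimage_val) ?_
      simp [Fintype.card_subtype_compl, hn]
    · rw [det_eq_zero_of_column_eq_zero e fun i => by simp [not_exists.mp hcol i]]
      simp

theorem abs_det_incidenceMatrix_union_le (hι : ∀ e : ι, IsChain (· ≤ ·) (Set.Iic e))
    (s t : ι → Set ι) (hs : ∀ i, IsConvexChain (s i)) (ht : ∀ i, IsConvexChain (t i))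
    (hst : ∀ i, Disjoint (s i) (t i)) :
    |(incidenceMatrix R fun i => s i ∪ t i).det| ≤ 2 ^ Fintype.card ι := by
  have hexp : (incidenceMatrix R fun i => s i ∪ t i).det =
      ∑ S : Finset ι, (incidenceMatrix R (S.piecewise s t)).det := by
    rw [incidenceMatrix_union R s t hst]
    simp_rw [← incidenceMatrix_piecewise]
    exact detRowAlternating.map_add_univ _ _
  calc |(incidenceMatrix R fun i => s i ∪ t i).det|
      ≤ ∑ S : Finset ι, |(incidenceMatrix R (S.piecewise s t)).det| :=
        hexp ▸ Finset.abs_sum_le_sum_abs _ _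
    _ ≤ ∑ _S : Finset ι, 1 := Finset.sum_le_sum fun S _ =>
        abs_det_incidenceMatrix_le_one hι fun i => by
          by_cases hi : i ∈ S <;> simp [hi, hs i, ht i]
    _ = 2 ^ Fintype.card ι := by simp

end Incidence

theorem abs_det_incidenceMatrix_symmDiff_le {ι κ R : Type*} [Fintype ι] [DecidableEq ι]
    [CommRing R] [LinearOrder R] [IsStrictOrderedRing R]
    (U : ι → Set κ) (hU : ∀ e, (U e).Nonempty)
    (hlam : ∀ e f, (U e ∩ U f).Nonempty → U e ⊆ U f ∨ U f ⊆ U e) (a b : ι → κ) :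
    |(incidenceMatrix R fun i => {e | a i ∈ U e} ∆ {e | b i ∈ U e}).det| ≤
      2 ^ Fintype.card ι := by
  let _ : Preorder ι := Preorder.lift fun e => OrderDual.toDual (U e)
  have hchain (v : κ) : IsChain (· ≤ ·) {e | v ∈ U e} := fun e he f hf _ =>
    (hlam e f ⟨v, he, hf⟩).symm
  have hlower (v : κ) : IsLowerSet {e | v ∈ U e} := fun _ _ hfe he => hfe he
  have hconv (v w : κ) : IsConvexChain ({e | v ∈ U e} \ {e | w ∈ U e}) :=
    ⟨(hchain v).mono Set.sdiff_subset, (hlower v).ordConnected.inter (hlower w).compl.ordConnected⟩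
  refine abs_det_incidenceMatrix_union_le (fun f => ?_) _ _ (fun i => hconv _ _)
    (fun i => hconv _ _) fun i => disjoint_sdiff_sdiff
  obtain ⟨v, hv⟩ := hU f
  exact (hchain v).mono fun e hef => hef hv

lemma Set.insert_eq_singleton_symmDiff {α : Type*} {a : α} {s : Set α} (h : a ∉ s) :
    insert a s = {a} ∆ s := by
  rw [(Set.disjoint_singleton_left.mpr h).symmDiff_eq_sup]
  rfl

namespace SimpleGraph.IsTree

open Walk

variable {V : Type*} {T : SimpleGraph V} (hT : T.IsTree) (r : V) {u v x y : V}

noncomputable def rootPath (v : V) : T.Walk r v := (hT.existsUnique_path r v).choose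

lemma isPath_rootPath (v : V) : (hT.rootPath r v).IsPath :=
  (hT.existsUnique_path r v).choose_spec.1

lemma eq_rootPath {p : T.Walk r v} (hp : p.IsPath) : p = hT.rootPath r v :=
  (hT.existsUnique_path r v).choose_spec.2 p hp

lemma rootPath_eq_takeUntil (hu : u ∈ (hT.rootPath r v).support) :
    hT.rootPath r u = (hT.rootPath r v).takeUntil u hu :=
  (hT.eq_rootPath r ((hT.isPath_rootPath r v).takeUntil hu)).symm

lemma edgeSet_rootPath_subset (hu : u ∈ (hT.rootPath r v).support) :
    (hT.rootPath r u).edgeSet ⊆ (hT.rootPath r v).edgeSet := by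
  rw [hT.rootPath_eq_takeUntil r hu]
  exact fun e he => edges_takeUntil_subset_edges _ hu he

lemma length_rootPath_lt (hu : u ∈ (hT.rootPath r v).support) (huv : u ≠ v) :
    (hT.rootPath r u).length < (hT.rootPath r v).length := by
  rw [hT.rootPath_eq_takeUntil r hu]
  exact length_takeUntil_lt_length hu huv

lemma mem_support_rootPath_or (hx : x ∈ (hT.rootPath r v).support)
    (hy : y ∈ (hT.rootPath r v).support) :
    x ∈ (hT.rootPath r y).support ∨ y ∈ (hT.rootPath r x).support := by
  have hpre (u : V) (hu : u ∈ (hT.rootPath r v).support) :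
      (hT.rootPath r u).support <+: (hT.rootPath r v).support := by
    rw [hT.rootPath_eq_takeUntil r hu]
    exact support_takeUntil_prefix_support _ hu
  exact (List.prefix_or_prefix_of_prefix (hpre x hx) (hpre y hy)).imp
    (·.subset (end_mem_support _)) (·.subset (end_mem_support _))

lemma edgeSet_rootPath_symmDiff_of_notMem (h : T.Adj x y) (hy : y ∉ (hT.rootPath r x).support) :
    (hT.rootPath r x).edgeSet ∆ (hT.rootPath r y).edgeSet = {s(x, y)} := by
  have hxy : s(x, y) ∉ (hT.rootPath r x).edgeSet := fun he =>
    hy (snd_mem_support_of_mem_edges _ he)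
  rw [← hT.eq_rootPath r ((hT.isPath_rootPath r x).concat hy h), edgeSet_concat,
    Set.insert_eq_singleton_symmDiff hxy, symmDiff_comm {s(x, y)}, symmDiff_symmDiff_cancel_left]

lemma edgeSet_rootPath_symmDiff_of_adj (h : T.Adj x y) :
    (hT.rootPath r x).edgeSet ∆ (hT.rootPath r y).edgeSet = {s(x, y)} := by
  by_cases hy : y ∈ (hT.rootPath r x).support
  · have hx : x ∉ (hT.rootPath r y).support := fun hx =>
      (hT.length_rootPath_lt r hx h.ne).not_gt (hT.length_rootPath_lt r hy h.ne.symm)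
    rw [symmDiff_comm, Sym2.eq_swap]
    exact hT.edgeSet_rootPath_symmDiff_of_notMem r h.symm hx
  · exact hT.edgeSet_rootPath_symmDiff_of_notMem r h hy

lemma edgeSet_eq_symmDiff_of_isPath {a b : V} (p : T.Walk a b) (hp : p.IsPath) :
    p.edgeSet = (hT.rootPath r a).edgeSet ∆ (hT.rootPath r b).edgeSet := by
  induction p with
  | nil => simp
  | @cons a c b h q ih =>
    rw [cons_isPath_iff] at hp
    have hac : s(a, c) ∉ q.edgeSet := fun he => hp.2 (fst_mem_support_of_mem_edges _ he)
    rw [edgeSet_cons, Set.insert_eq_singleton_symmDiff hac,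
      ← hT.edgeSet_rootPath_symmDiff_of_adj r h, ih hp.1, symmDiff_assoc,
      symmDiff_symmDiff_cancel_left]

def subtree (e : Sym2 V) : Set V := {v | e ∈ (hT.rootPath r v).edgeSet}

lemma exists_mem_subtree {e : Sym2 V} (he : e ∈ T.edgeSet) : ∃ c ∈ e, c ∈ hT.subtree r e := by
  induction e using Sym2.ind with
  | _ x y =>
  have hxy : s(x, y) ∈ (hT.rootPath r x).edgeSet ∆ (hT.rootPath r y).edgeSet := by
    simp [hT.edgeSet_rootPath_symmDiff_of_adj r he]
  rcases Set.mem_symmDiff.mp hxy with h | h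
  · exact ⟨x, Sym2.mem_mk_left x y, h.1⟩
  · exact ⟨y, Sym2.mem_mk_right x y, h.1⟩

/-- The endpoints `c ∈ e`, `d ∈ f` lying below `e`, `f` are on the root path of a common vertex,
so one of them is on the root path of the other. -/
lemma subtree_subset_or_subset {e f : Sym2 V} (he : e ∈ T.edgeSet) (hf : f ∈ T.edgeSet)
    (hef : (hT.subtree r e ∩ hT.subtree r f).Nonempty) :
    hT.subtree r e ⊆ hT.subtree r f ∨ hT.subtree r f ⊆ hT.subtree r e := by
  obtain ⟨v, hve, hvf⟩ := hef
  obtain ⟨c, hce, hc⟩ := hT.exists_mem_subtree r he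
  obtain ⟨d, hdf, hd⟩ := hT.exists_mem_subtree r hf
  have hsupp {g : Sym2 V} {z w : V} (hz : z ∈ g) (hw : w ∈ hT.subtree r g) :
      z ∈ (hT.rootPath r w).support := mem_support_of_mem_edges hw hz
  rcases hT.mem_support_rootPath_or r (hsupp hce hve) (hsupp hdf hvf) with h | h
  · exact Or.inr fun w hw => hT.edgeSet_rootPath_subset r (hsupp hdf hw)
      (hT.edgeSet_rootPath_subset r h hc)
  · exact Or.inl fun w hw => hT.edgeSet_rootPath_subset r (hsupp hce hw)
      (hT.edgeSet_rootPath_subset r h hd)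

end SimpleGraph.IsTree

/-- If `T` is a tree on `n` vertices and `𝒫` is a family of `n - 1` paths in `T`
(indexed, like the columns, by the `n - 1` edges of `T`), then the path-edge incidence
matrix `A(𝒫, T)` satisfies `|det A(𝒫, T)| ≤ 2^(n-1)`. -/
theorem abs_det_pathEdgeIncidence_le {V : Type} [Fintype V] [DecidableEq V] (n : ℕ)
    (T : SimpleGraph V) (hT : T.IsTree) (hn : Fintype.card V = n)
    (P : T.edgeSet → Σ u : V, Σ v : V, T.Walk u v)
    (hP : ∀ e, (P e).2.2.IsPath)
    (A : Matrix T.edgeSet T.edgeSet ℝ)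
    (hA : ∀ p e, A p e = if (e : Sym2 V) ∈ (P p).2.2.edges then 1 else 0) :
    |A.det| ≤ 2 ^ (n - 1) := by
  obtain ⟨r⟩ := hT.connected.nonempty
  let U (e : T.edgeSet) : Set V := hT.subtree r e
  have hA' : A = incidenceMatrix ℝ fun p => {e | (P p).1 ∈ U e} ∆ {e | (P p).2.1 ∈ U e} := by
    ext p e
    have hmem : (e : Sym2 V) ∈ (P p).2.2.edges ↔
        e ∈ {e | (P p).1 ∈ U e} ∆ {e | (P p).2.1 ∈ U e} := by
      rw [← SimpleGraph.Walk.mem_edgeSet, hT.edgeSet_eq_symmDiff_of_isPath r _ (hP p)]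
      rfl
    rw [hA, incidenceMatrix_apply]
    exact if_congr hmem rfl rfl
  have hcard : Fintype.card T.edgeSet = n - 1 := by
    rw [← hn, ← hT.card_edgeFinset, SimpleGraph.edgeFinset_card, Nat.add_sub_cancel]
  rw [hA', ← hcard]
  exact abs_det_incidenceMatrix_symmDiff_le U
    (fun e => (hT.exists_mem_subtree r e.2).imp fun _ h => h.2)
    (fun e f => hT.subtree_subset_or_subset r e.2 f.2) _ _
end

section
/- For every positive integer n divisible by 7, there exists a matrix A ∈ {0,1}^{n×n} containing exactly 3n ones such that det(A) = 24^(n/7). -/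
open scoped Classical

/-!
The incidence matrix of the Fano plane is a 0/1 matrix with three ones in every row, and an
integral triangular factorisation shows that its determinant is `24`. The block diagonal matrix
with `n / 7` copies of it keeps three ones in every row, hence has `3n` ones, and its determinant
is `24 ^ (n / 7)`.
-/

open Finset Matrix

theorem Finset.natCast_card_filter_eq_one {α R : Type*} [Fintype α] [AddCommMonoidWithOne R]
    (f : α → R) (hf : ∀ a, f a = 0 ∨ f a = 1) : (#{a | f a = 1} : R) = ∑ a, f a := by
  rw [natCast_card_filter]
  refine sum_congr rfl fun a _ => ?_
  rcases hf a with h | h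
  · simp only [h, ite_eq_right_iff]
    exact Eq.symm
  · simp [h]

theorem Matrix.sum_blockDiagonal_row {m n o α : Type*} [Fintype n] [Fintype o] [DecidableEq o]
    [AddCommMonoid α] (M : o → Matrix m n α) (i : m) (k : o) :
    ∑ j, blockDiagonal M (i, k) j = ∑ j, M k i j := by
  simp [Fintype.sum_prod_type_right, blockDiagonal_apply]

theorem exists_zero_one_row_sum_det_pow {m R : Type*} [Fintype m] [DecidableEq m] [CommRing R]
    (M : Matrix m m R) (hM : ∀ i j, M i j = 0 ∨ M i j = 1) (r : R) (hr : ∀ i, ∑ j, M i j = r)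
    (k n : ℕ) (hn : Fintype.card m * k = n) :
    ∃ A : Matrix (Fin n) (Fin n) R,
      (∀ i j, A i j = 0 ∨ A i j = 1) ∧ (∀ i, ∑ j, A i j = r) ∧ A.det = M.det ^ k := by
  let e : m × Fin k ≃ Fin n := Fintype.equivFinOfCardEq (by simp [hn])
  let B : Matrix (m × Fin k) (m × Fin k) R := blockDiagonal fun _ => M
  refine ⟨reindex e e B, fun i j => ?_, fun i => ?_, ?_⟩
  · simp only [reindex_apply, submatrix_apply, B, blockDiagonal_apply]
    split_ifs
    exacts [hM _ _, Or.inl rfl]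
  · simp only [reindex_apply, submatrix_apply]
    rw [e.symm.sum_comp (B (e.symm i)), sum_blockDiagonal_row, hr]
  · simp [B, det_blockDiagonal]

/-- Row `i` is the line `i + {0, 1, 3}` of the Fano plane, `{0, 1, 3}` being a perfect difference
set modulo `7`. -/
def fano (R : Type*) [Zero R] [One R] : Matrix (Fin 7) (Fin 7) R :=
  of fun i j => if j - i ∈ ({0, 1, 3} : Finset (Fin 7)) then 1 else 0

section Fano

variable (R : Type*)

theorem fano_apply_eq_zero_or_eq_one [Zero R] [One R] (i j : Fin 7) :
    fano R i j = 0 ∨ fano R i j = 1 := by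
  simp only [fano, of_apply]
  split_ifs <;> simp

theorem sum_fano_row [AddCommMonoidWithOne R] (i : Fin 7) : ∑ j, fano R i j = 3 := by
  simp only [fano, of_apply]
  exact ((Equiv.subRight i).sum_comp fun d => if d ∈ _ then 1 else 0).trans <| by
    rw [sum_boole]; rfl

theorem det_fano_int : (fano ℤ).det = 24 := by
  -- Gaussian elimination of `fano ℤ`, with the pivot `4` of the fifth column split as `2 * 2`
  -- so that both factors stay integral.
  let L : Matrix (Fin 7) (Fin 7) ℤ :=
    !![1, 0, 0, 0, 0, 0, 0;
       0, 1, 0, 0, 0, 0, 0;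
       0, 0, 1, 0, 0, 0, 0;
       0, 0, 0, 1, 0, 0, 0;
       1, -1, 1, -2, 2, 0, 0;
       0, 1, -1, 1, -1, 1, 0;
       1, -1, 2, -3, 2, -1, 1]
  let U : Matrix (Fin 7) (Fin 7) ℤ :=
    !![1, 1, 0, 1, 0, 0, 0;
       0, 1, 1, 0, 1, 0, 0;
       0, 0, 1, 1, 0, 1, 0;
       0, 0, 0, 1, 1, 0, 1;
       0, 0, 0, 0, 2, 0, 1;
       0, 0, 0, 0, 0, 2, 1;
       0, 0, 0, 0, 0, 0, 3]
  have hLU : fano ℤ = L * U := by decide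
  have hL : L.IsLowerTriangular := by
    intro i j h
    fin_cases i <;> fin_cases j <;> revert h <;> decide
  have hU : U.IsUpperTriangular := by
    intro i j h
    fin_cases i <;> fin_cases j <;> revert h <;> decide
  rw [hLU, det_mul, det_of_isLowerTriangular L hL, det_of_isUpperTriangular hU]
  decide

theorem det_fano [CommRing R] : (fano R).det = 24 := by
  have hmap : (fano ℤ).map (Int.cast : ℤ → R) = fano R := by
    ext i j
    simp only [fano, map_apply, of_apply]
    split_ifs <;> simp
  rw [← hmap, ← Int.cast_det, det_fano_int]
  norm_num

end Fano

theorem exists_det_eq_twentyfour_pow_n_div_seven_general (n : ℕ) (hdvd : 7 ∣ n) :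
    ∃ A : Matrix (Fin n) (Fin n) ℝ,
      (∀ i j, A i j = 0 ∨ A i j = 1) ∧
      (Finset.univ.filter fun p : Fin n × Fin n => A p.1 p.2 = 1).card = 3 * n ∧
      A.det = 24 ^ ((n : ℝ) / 7) := by
  obtain ⟨k, rfl⟩ := hdvd
  obtain ⟨A, hA01, hArow, hAdet⟩ := exists_zero_one_row_sum_det_pow (fano ℝ)
    (fano_apply_eq_zero_or_eq_one ℝ) 3 (sum_fano_row ℝ) k (7 * k) (by simp)
  refine ⟨A, hA01, ?_, ?_⟩
  · have hcount : (#{p : Fin (7 * k) × Fin (7 * k) | A p.1 p.2 = 1} : ℝ) = 3 * (7 * k : ℕ) := by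
      rw [natCast_card_filter_eq_one _ fun p => hA01 p.1 p.2, Fintype.sum_prod_type]
      simp [hArow, mul_comm]
    exact_mod_cast hcount
  · rw [hAdet, det_fano, show ((7 * k : ℕ) : ℝ) / 7 = k by push_cast; ring, Real.rpow_natCast]

/-- For every positive `n` divisible by `7` there is an `n × n` 0/1-matrix containing
exactly `3n` ones whose determinant is `24^(n/7)`. -/
theorem exists_det_eq_twentyfour_pow_n_div_seven (n : ℕ) (hn : 0 < n) (hdvd : 7 ∣ n) :
    ∃ A : Matrix (Fin n) (Fin n) ℝ,
      (∀ i j, A i j = 0 ∨ A i j = 1) ∧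
      (Finset.univ.filter fun p : Fin n × Fin n => A p.1 p.2 = 1).card = 3 * n ∧
      A.det = 24 ^ ((n : ℝ) / 7) :=
  exists_det_eq_twentyfour_pow_n_div_seven_general n hdvd
end

section
/- Let r₁, r₂, r₃, r₄ ∈ {−1,0,1}ⁿ be four (row) vectors, each having exactly four nonzero entries, such that in each rᵢ the nonzero entries alternate in sign when read in order of increasing coordinate index (i.e., consecutive nonzero entries have opposite signs). Suppose there is a coordinate j such that all four vectors have a nonzero entry in coordinate j. Then there exist distinct indices i and i' in {1,2,3,4} such that the standard inner product of rᵢ and rᵢ' is nonzero. -/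
/-!
The nonzero entries of an alternating sign vector with an even number of them cancel in pairs, so
each `r i` has coordinate sum `0`. If the `r i` were pairwise orthogonal, then
`w = ∑ i, r i j • r i` would satisfy `w ⬝ᵥ w = ∑ i, r i ⬝ᵥ r i = 16 = (w j) ^ 2`; hence `w` is
supported at `j`, and its coordinate sum would be `w j = 4` instead of `0`.
-/

open scoped Classical

open Finset Matrix

def SignAlternating {ι : Type*} [LinearOrder ι] (v : ι → ℝ) : Prop :=
  ∀ j j', j < j' → v j ≠ 0 → v j' ≠ 0 → (∀ j'', j < j'' → j'' < j' → v j'' = 0) → v j * v j' < 0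

lemma eq_neg_of_mul_neg_of_sign {a b : ℝ} (ha : a = -1 ∨ a = 0 ∨ a = 1)
    (hb : b = -1 ∨ b = 0 ∨ b = 1) (h : a * b < 0) : b = -a := by
  rcases ha with rfl | rfl | rfl <;> rcases hb with rfl | rfl | rfl <;> norm_num at h <;> norm_num

lemma sq_eq_one_of_sign {a : ℝ} (ha : a = -1 ∨ a = 0 ∨ a = 1) (h : a ≠ 0) : a ^ 2 = 1 := by
  rcases ha with rfl | rfl | rfl <;> norm_num at h <;> norm_num

lemma dotProduct_self_eq_card_of_sign {ι : Type*} [Fintype ι] {v : ι → ℝ}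
    (hv : ∀ j, v j = -1 ∨ v j = 0 ∨ v j = 1) : v ⬝ᵥ v = #{j | v j ≠ 0} := by
  rw [dotProduct, Finset.natCast_card_filter]
  refine Finset.sum_congr rfl fun j _ => ?_
  by_cases h : v j = 0
  · simp [h]
  · rw [if_pos h, ← sq, sq_eq_one_of_sign (hv j) h]

namespace SignAlternating

variable {ι : Type*} [LinearOrder ι] [Fintype ι] {v : ι → ℝ}

lemma apply_orderEmbOfFin_succ (hv : SignAlternating v) (hval : ∀ j, v j = -1 ∨ v j = 0 ∨ v j = 1)
    {m : ℕ} (hm : #{j | v j ≠ 0} = m) {k : ℕ} (hk : k + 1 < m) :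
    v (orderEmbOfFin _ hm ⟨k + 1, hk⟩) = -v (orderEmbOfFin _ hm ⟨k, by omega⟩) := by
  set e := orderEmbOfFin _ hm
  have hne : ∀ l, v (e l) ≠ 0 := fun l => (mem_filter.1 (orderEmbOfFin_mem _ hm l)).2
  refine eq_neg_of_mul_neg_of_sign (hval _) (hval _)
    (hv _ _ (e.strictMono (Fin.mk_lt_mk.2 k.lt_succ_self)) (hne _) (hne _) fun x hkx hxk => ?_)
  by_contra hx
  obtain ⟨l, rfl⟩ : x ∈ Set.range e := by simpa [e] using hx
  have := e.lt_iff_lt.1 hkx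
  have := e.lt_iff_lt.1 hxk
  simp only [Fin.lt_def] at *
  omega

lemma apply_orderEmbOfFin (hv : SignAlternating v) (hval : ∀ j, v j = -1 ∨ v j = 0 ∨ v j = 1)
    {m : ℕ} (hm : #{j | v j ≠ 0} = m + 1) (k : Fin (m + 1)) :
    v (orderEmbOfFin _ hm k) = (-1) ^ (k : ℕ) * v (orderEmbOfFin _ hm 0) := by
  obtain ⟨k, hk⟩ := k
  induction k with
  | zero => simp
  | succ k ih =>
    rw [hv.apply_orderEmbOfFin_succ hval hm hk, ih (by omega), pow_succ]
    ring

lemma sum_eq_zero (hv : SignAlternating v) (hval : ∀ j, v j = -1 ∨ v j = 0 ∨ v j = 1)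
    (heven : Even #{j | v j ≠ 0}) : ∑ j, v j = 0 := by
  obtain ⟨m, hm⟩ : ∃ m, #{j | v j ≠ 0} = m := ⟨_, rfl⟩
  rw [← Finset.sum_filter_ne_zero]
  cases m with
  | zero => rw [Finset.card_eq_zero.1 hm, Finset.sum_empty]
  | succ m =>
    rw [← image_orderEmbOfFin_univ _ hm, Finset.sum_image (orderEmbOfFin _ hm).injective.injOn,
      Finset.sum_congr rfl fun k _ => hv.apply_orderEmbOfFin hval hm k, ← Finset.sum_mul,
      Fin.sum_univ_eq_sum_range (fun k => (-1 : ℝ) ^ k), neg_one_geom_sum, if_pos (hm ▸ heven),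
      zero_mul]

end SignAlternating

lemma sum_eq_apply_of_dotProduct_self_le {ι : Type*} [Fintype ι] {v : ι → ℝ} {j : ι}
    (h : v ⬝ᵥ v ≤ v j ^ 2) : ∑ k, v k = v j := by
  have hrest : ∑ k ∈ univ.erase j, v k * v k ≤ 0 := by
    rw [dotProduct, ← Finset.add_sum_erase _ _ (mem_univ j)] at h
    linarith
  have hzero : ∀ k ∈ univ.erase j, v k = 0 := fun k hk => mul_self_eq_zero.1 <|
    (Finset.sum_eq_zero_iff_of_nonneg fun k _ => mul_self_nonneg (v k)).1
      (hrest.antisymm (Finset.sum_nonneg fun k _ => mul_self_nonneg (v k))) k hk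
  rw [← Finset.add_sum_erase _ _ (mem_univ j), Finset.sum_eq_zero hzero, add_zero]

theorem exists_dotProduct_ne_zero {κ ι : Type*} [Fintype κ] [Nonempty κ] [Fintype ι]
    (r : κ → ι → ℝ) (j : ι) (hj : ∀ i, r i j ^ 2 = 1)
    (hnorm : ∀ i, r i ⬝ᵥ r i ≤ Fintype.card κ) (hsum : ∀ i, ∑ k, r i k = 0) :
    ∃ i i', i ≠ i' ∧ r i ⬝ᵥ r i' ≠ 0 := by
  by_contra! horth
  set w : ι → ℝ := ∑ i, r i j • r i
  have hwj : w j = Fintype.card κ := by simp [w, ← sq, hj]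
  have hww : w ⬝ᵥ w ≤ w j ^ 2 := calc
    w ⬝ᵥ w = ∑ i, r i j ^ 2 * (r i ⬝ᵥ r i) := by
      simp only [w, dotProduct_sum, sum_dotProduct, dotProduct_smul, smul_dotProduct, smul_eq_mul]
      refine Finset.sum_congr rfl fun i _ => ?_
      rw [Finset.sum_eq_single i (fun i' _ hi' => by simp [horth i' i hi']) (by simp)]
      ring
    _ ≤ ∑ _i : κ, (Fintype.card κ : ℝ) := Finset.sum_le_sum fun i _ => by simpa [hj] using hnorm i
    _ = w j ^ 2 := by simp [hwj, sq]
  have hw : ∑ k, w k = 0 := by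
    simp only [w, Finset.sum_apply, Pi.smul_apply, smul_eq_mul]
    rw [Finset.sum_comm]
    simp [← Finset.mul_sum, hsum]
  have hcard : (0 : ℝ) < Fintype.card κ := by exact_mod_cast Fintype.card_pos
  linarith [sum_eq_apply_of_dotProduct_self_le hww]

/-- Let `r 1, …, r 4 ∈ {-1,0,1}ⁿ` each have exactly four nonzero entries whose signs
alternate (consecutive nonzero entries, in order of increasing index, have opposite
signs).  If all four vectors have a nonzero entry in some common coordinate `j`, then
two of them have nonzero inner product. -/
theorem exists_nonorthogonal_pair (n : ℕ) (r : Fin 4 → Fin n → ℝ)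
    (hval : ∀ i j, r i j = -1 ∨ r i j = 0 ∨ r i j = 1)
    (hfour : ∀ i, (Finset.univ.filter fun j => r i j ≠ 0).card = 4)
    (halt : ∀ (i : Fin 4) (j j' : Fin n), j < j' → r i j ≠ 0 → r i j' ≠ 0 →
      (∀ j'' : Fin n, j < j'' → j'' < j' → r i j'' = 0) → r i j * r i j' < 0)
    (hcommon : ∃ j : Fin n, ∀ i, r i j ≠ 0) :
    ∃ i i' : Fin 4, i ≠ i' ∧ ∑ j, r i j * r i' j ≠ 0 := by
  obtain ⟨j, hj⟩ := hcommon
  refine exists_dotProduct_ne_zero r j (fun i => sq_eq_one_of_sign (hval i j) (hj i))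
    (fun i => ?_) (fun i => SignAlternating.sum_eq_zero (halt i) (hval i) ?_)
  · rw [dotProduct_self_eq_card_of_sign (hval i), hfour i]
    simp
  · rw [hfour i]
    decide
end
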